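/- arXiv:1909.06673 — 5 statements merged into one kernel-verified Lean document; each statement's English description precedes it below -/
import Mathlib

section
/- For every n ≥ 2 and every k with n ≥ k ≥ 1, the sequential encoding LT_SEQ^{n,k} of the at-most-k constraint on n input variables is propagation complete. -/
set_option autoImplicit false

universe u v

/-- A literal: a boolean variable together with a polarity. -/
structure Lit (V : Type u) where
  var : V
  pos : Bool

/-- The complementary literal. -/
def Lit.negate {V : Type u} (l : Lit V) : Lit V := ⟨l.var, !l.pos⟩

/-- A literal is satisfied by a total assignment. -/
def Lit.eval {V : Type u} (a : V → Bool) (l : Lit V) : Prop := a l.var = l.pos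

/-- A clause is a (finite in all our uses) disjunction of a set of literals. -/
abbrev Clause (V : Type u) := Set (Lit V)

/-- A CNF formula is a conjunction of a set of clauses. -/
abbrev CNF (V : Type u) := Set (Clause V)

/-- A clause is satisfied iff some of its literals is. -/
def Clause.Sat {V : Type u} (a : V → Bool) (C : Clause V) : Prop := ∃ l ∈ C, Lit.eval a l

/-- A CNF formula is satisfied iff all of its clauses are. -/
def CNF.Sat {V : Type u} (a : V → Bool) (φ : CNF V) : Prop := ∀ C ∈ φ, Clause.Sat a C

def CNF.Satisfiable {V : Type u} (φ : CNF V) : Prop := ∃ a : V → Bool, CNF.Sat a φ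

/-- `φ ⊨ l`. -/
def CNF.Entails {V : Type u} (φ : CNF V) (l : Lit V) : Prop :=
  ∀ a : V → Bool, CNF.Sat a φ → Lit.eval a l

/-- A partial assignment, i.e. a set of literals, is consistent if it contains
no complementary pair of literals. -/
def ConsistentPA {V : Type u} (α : Set (Lit V)) : Prop := ∀ l ∈ α, Lit.negate l ∉ α

/-- The set of unit clauses corresponding to a partial assignment `α`;
`φ ∪ paUnits α` represents `φ ∧ α`. -/
def paUnits {V : Type u} (α : Set (Lit V)) : CNF V := (fun l => ({l} : Clause V)) '' α

/-- Derivability by repeated unit resolution: from a clause `C ∋ l` and the unit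
clause `¬l` derive `C \ {l}`.  `UnitDeriv φ ∅` means `φ ⊢₁ ⊥` and
`UnitDeriv φ {l}` means `φ ⊢₁ l`. -/
inductive UnitDeriv {V : Type u} (φ : CNF V) : Clause V → Prop where
  | base {C : Clause V} : C ∈ φ → UnitDeriv φ C
  | step {C : Clause V} (l : Lit V) : l ∈ C → UnitDeriv φ C →
      UnitDeriv φ {Lit.negate l} → UnitDeriv φ (C \ {l})

/-- The set of variables occurring in a CNF formula. -/
def CNF.vars {V : Type u} (φ : CNF V) : Set V := ⋃ C ∈ φ, Lit.var '' C

/-- All literals of `α` are literals on the variables `W`. -/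
def LitsOn {V : Type u} (α : Set (Lit V)) (W : Set V) : Prop := ∀ l ∈ α, l.var ∈ W

/-- `φ` is unit refutation complete on the variables `W`. -/
def URCon {V : Type u} (φ : CNF V) (W : Set V) : Prop :=
  ∀ α : Set (Lit V), ConsistentPA α → LitsOn α W →
    ¬ CNF.Satisfiable (φ ∪ paUnits α) → UnitDeriv (φ ∪ paUnits α) ∅

/-- `φ` is propagation complete on the variables `W`. -/
def PCon {V : Type u} (φ : CNF V) (W : Set V) : Prop :=
  ∀ α : Set (Lit V), ConsistentPA α → LitsOn α W →
    ∀ l : Lit V, l.var ∈ W → CNF.Entails (φ ∪ paUnits α) l →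
      UnitDeriv (φ ∪ paUnits α) {l} ∨ UnitDeriv (φ ∪ paUnits α) ∅

/-- `φ` is a CNF encoding of the function `f` with input variables `X`
(the remaining variables of `φ` being auxiliary); `f` is assumed to depend
only on the values of the variables in `X`. -/
def IsEncodingOn {V : Type u} (φ : CNF V) (X : Set V) (f : (V → Bool) → Prop) : Prop :=
  ∀ a : V → Bool, f a ↔ ∃ b : V → Bool, (∀ x ∈ X, b x = a x) ∧ CNF.Sat b φ

/-- The positive literal on a variable. -/
def posL {V : Type u} (x : V) : Lit V := ⟨x, true⟩
/-- The negative literal on a variable. -/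
def negL {V : Type u} (x : V) : Lit V := ⟨x, false⟩

namespace Seq

/-- Variables of the sequential encoding: `Sum.inl i` is the input variable `xᵢ`
and `Sum.inr (i, j)` is the auxiliary variable `s_{i,j}`. -/
abbrev V : Type := ℕ ⊕ (ℕ × ℕ)

def X (i : ℕ) : V := Sum.inl i
def S (i j : ℕ) : V := Sum.inr (i, j)

/-- The clauses of the sequential encoding `LT_SEQ^{n,k}` (Sinz 2005) of the
at-most-`k` constraint on the input variables `x₁, …, xₙ` with auxiliary
variables `s_{i,j}`, `1 ≤ i ≤ n-1`, `1 ≤ j ≤ k`. -/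
def seqCNF (n k : ℕ) : CNF V :=
  {C | C = {negL (X 1), posL (S 1 1)}
    ∨ (∃ j, 1 < j ∧ j ≤ k ∧ C = {negL (S 1 j)})
    ∨ (∃ i, 1 < i ∧ i < n ∧
        (C = {negL (X i), posL (S i 1)}
        ∨ C = {negL (S (i-1) 1), posL (S i 1)}
        ∨ (∃ j, 1 < j ∧ j ≤ k ∧
            (C = {negL (X i), negL (S (i-1) (j-1)), posL (S i j)}
            ∨ C = {negL (S (i-1) j), posL (S i j)}))
        ∨ C = {negL (X i), negL (S (i-1) k)}))
    ∨ C = {negL (X n), negL (S (n-1) k)}}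

/-- The input variables of `LT_SEQ^{n,k}`. -/
def inputs (n : ℕ) : Set V := {w | ∃ i, 1 ≤ i ∧ i ≤ n ∧ w = X i}

/-- All the variables (input and auxiliary) of `LT_SEQ^{n,k}`. -/
def allVars (n k : ℕ) : Set V :=
  inputs n ∪ {w | ∃ i j, 1 ≤ i ∧ i ≤ n - 1 ∧ 1 ≤ j ∧ j ≤ k ∧ w = S i j}

/-- The at-most-`k` constraint on the input variables `x₁, …, xₙ`. -/
def atMostK (n k : ℕ) (a : V → Bool) : Prop :=
  ((Finset.Icc 1 n).filter (fun i => a (X i) = true)).card ≤ k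

end Seq

/-!
Every clause of `LT_SEQ^{n,k}` is Horn: a propagation rule (`xᵢ → s_{i,1}`, `s_{i-1,j} → s_{i,j}`,
`xᵢ ∧ s_{i-1,j-1} → s_{i,j}`) or a prohibition (`¬s_{1,j}`, `¬(xᵢ ∧ s_{i-1,k})`). Reading `s_{i,j}`
as "at least `j` of `x₁, …, xᵢ` are true" gives the encoding.

For propagation completeness, suppose unit propagation on `φ ∧ α` neither fails nor derives `l`.
Close the set of positively derived variables, together with the variable of `l` when `l` is
negative, under the propagation rules. Reading the rules backwards, every added variable `v` is
blamed on the seed: if `¬v` were derivable, so would be the negation of the seed, which lies in a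
row no later than `v`. So no prohibition and no literal of `α` is violated, and the closure is a
model of `φ ∧ α` falsifying `l`.
-/

section

variable {V : Type u}

@[simp] lemma Lit.eval_posL {a : V → Bool} {w : V} : Lit.eval a (posL w) ↔ a w = true := Iff.rfl

@[simp] lemma Lit.eval_negL {a : V → Bool} {w : V} : Lit.eval a (negL w) ↔ a w = false := Iff.rfl

@[simp] lemma Lit.negate_posL (w : V) : (posL w).negate = negL w := rfl

@[simp] lemma Lit.negate_negL (w : V) : (negL w).negate = posL w := rfl

@[simp] lemma Clause.sat_singleton {a : V → Bool} {l : Lit V} :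
    Clause.Sat a {l} ↔ l.eval a := by
  simp [Clause.Sat]

@[simp] lemma Clause.sat_insert {a : V → Bool} {l : Lit V} {C : Clause V} :
    Clause.Sat a (insert l C) ↔ l.eval a ∨ Clause.Sat a C := by
  simp [Clause.Sat]

lemma CNF.sat_union {a : V → Bool} {φ ψ : CNF V} :
    CNF.Sat a (φ ∪ ψ) ↔ CNF.Sat a φ ∧ CNF.Sat a ψ := by
  simp only [CNF.Sat, Set.mem_union, or_imp, forall_and]

lemma CNF.sat_paUnits {a : V → Bool} {α : Set (Lit V)} :
    CNF.Sat a (paUnits α) ↔ ∀ l ∈ α, l.eval a := by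
  simp [CNF.Sat, paUnits]

namespace UnitDeriv

variable {ψ : CNF V}

lemma of_mem_paUnits {φ : CNF V} {α : Set (Lit V)} {l : Lit V} (hl : l ∈ α) :
    UnitDeriv (φ ∪ paUnits α) {l} :=
  base (Set.mem_union_right φ ⟨l, hl, rfl⟩)

lemma empty_of_compl {l : Lit V} (h : UnitDeriv ψ {l}) (h' : UnitDeriv ψ {l.negate}) :
    UnitDeriv ψ ∅ := by
  simpa using step (C := {l}) l rfl h h'

lemma sdiff {C D : Clause V} (hD : D.Finite) (hC : UnitDeriv ψ C)
    (h : ∀ m ∈ D, UnitDeriv ψ {m.negate}) : UnitDeriv ψ (C \ D) := by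
  induction D, hD using Set.Finite.induction_on with
  | empty => simpa using hC
  | @insert m D _ _ ih =>
    rw [Set.insert_eq, Set.union_comm, ← Set.sdiff_sdiff]
    have hCD := ih fun m' hm' => h m' (Set.mem_insert_of_mem m hm')
    by_cases hm : m ∈ C \ D
    · exact step m hm hCD (h m (Set.mem_insert m D))
    · rwa [Set.sdiff_singleton_eq_self hm]

lemma of_clause {C : Clause V} (hC : C ∈ ψ) (hfin : C.Finite) {l : Lit V} (hl : l ∈ C)
    (h : ∀ m ∈ C, m ≠ l → UnitDeriv ψ {m.negate}) : UnitDeriv ψ {l} := by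
  have := (base hC).sdiff (hfin.sdiff (t := {l})) fun m hm => h m hm.1 hm.2
  rwa [Set.sdiff_sdiff_cancel_left (Set.singleton_subset_iff.2 hl)] at this

variable {a b c : V}

lemma pos_of_imp (hC : {negL a, posL b} ∈ ψ) (ha : UnitDeriv ψ {posL a}) :
    UnitDeriv ψ {posL b} :=
  of_clause hC (Set.toFinite _) (by simp) <| by
    rintro m (rfl | rfl) hm
    exacts [ha, absurd rfl hm]

lemma neg_of_imp (hC : {negL a, posL b} ∈ ψ) (hb : UnitDeriv ψ {negL b}) :
    UnitDeriv ψ {negL a} :=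
  of_clause hC (Set.toFinite _) (by simp) <| by
    rintro m (rfl | rfl) hm
    exacts [absurd rfl hm, hb]

lemma neg_of_nand (hC : {negL a, negL b} ∈ ψ) (ha : UnitDeriv ψ {posL a}) :
    UnitDeriv ψ {negL b} :=
  of_clause hC (Set.toFinite _) (by simp) <| by
    rintro m (rfl | rfl) hm
    exacts [ha, absurd rfl hm]

lemma pos_of_imp₂ (hC : {negL a, negL c, posL b} ∈ ψ) (ha : UnitDeriv ψ {posL a})
    (hc : UnitDeriv ψ {posL c}) : UnitDeriv ψ {posL b} :=
  of_clause hC (Set.toFinite _) (by simp) <| by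
    rintro m (rfl | rfl | rfl) hm
    exacts [ha, hc, absurd rfl hm]

lemma neg_right_of_imp₂ (hC : {negL a, negL c, posL b} ∈ ψ) (ha : UnitDeriv ψ {posL a})
    (hb : UnitDeriv ψ {negL b}) : UnitDeriv ψ {negL c} :=
  of_clause hC (Set.toFinite _) (by simp) <| by
    rintro m (rfl | rfl | rfl) hm
    exacts [ha, absurd rfl hm, hb]

lemma neg_left_of_imp₂ (hC : {negL a, negL c, posL b} ∈ ψ) (hc : UnitDeriv ψ {posL c})
    (hb : UnitDeriv ψ {negL b}) : UnitDeriv ψ {negL a} :=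
  of_clause hC (Set.toFinite _) (by simp) <| by
    rintro m (rfl | rfl | rfl) hm
    exacts [absurd rfl hm, hc, hb]

end UnitDeriv

end

namespace Seq

variable {n k i j : ℕ}

lemma mem_first (hi : 1 ≤ i) (hin : i < n) :
    ({negL (X i), posL (S i 1)} : Clause V) ∈ seqCNF n k := by
  obtain rfl | hi := hi.eq_or_lt
  · exact Or.inl rfl
  · exact Or.inr (Or.inr (Or.inl ⟨i, hi, hin, Or.inl rfl⟩))

lemma mem_row_one (hj : 1 < j) (hjk : j ≤ k) : ({negL (S 1 j)} : Clause V) ∈ seqCNF n k :=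
  Or.inr (Or.inl ⟨j, hj, hjk, rfl⟩)

lemma mem_carry (hi : 1 < i) (hin : i < n) (hj : 1 ≤ j) (hjk : j ≤ k) :
    ({negL (S (i-1) j), posL (S i j)} : Clause V) ∈ seqCNF n k := by
  obtain rfl | hj := hj.eq_or_lt
  · exact Or.inr (Or.inr (Or.inl ⟨i, hi, hin, Or.inr (Or.inl rfl)⟩))
  · exact Or.inr (Or.inr (Or.inl ⟨i, hi, hin, Or.inr (Or.inr (Or.inl ⟨j, hj, hjk, Or.inr rfl⟩))⟩))

lemma mem_incr (hi : 1 < i) (hin : i < n) (hj : 1 < j) (hjk : j ≤ k) :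
    ({negL (X i), negL (S (i-1) (j-1)), posL (S i j)} : Clause V) ∈ seqCNF n k :=
  Or.inr (Or.inr (Or.inl ⟨i, hi, hin, Or.inr (Or.inr (Or.inl ⟨j, hj, hjk, Or.inl rfl⟩))⟩))

lemma mem_overflow (hi : 1 < i) (hin : i ≤ n) :
    ({negL (X i), negL (S (i-1) k)} : Clause V) ∈ seqCNF n k := by
  obtain hin | rfl := hin.lt_or_eq
  · exact Or.inr (Or.inr (Or.inl ⟨i, hi, hin, Or.inr (Or.inr (Or.inr rfl))⟩))
  · exact Or.inr (Or.inr (Or.inr rfl))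

/-- `T` is the set of true variables. Each field merges two clause families of `seqCNF` (the
`i = 1` or `j = 1` or `i = n` instance with the general one), which is why
`sat_seqCNF_iff_isModel` needs `2 ≤ n` and `1 ≤ k`. -/
structure IsModel (n k : ℕ) (T : V → Prop) : Prop where
  first : ∀ i, 1 ≤ i → i < n → T (X i) → T (S i 1)
  row_one : ∀ j, 1 < j → j ≤ k → ¬ T (S 1 j)
  carry : ∀ i j, 1 < i → i < n → 1 ≤ j → j ≤ k → T (S (i-1) j) → T (S i j)
  incr : ∀ i j, 1 < i → i < n → 1 < j → j ≤ k → T (X i) → T (S (i-1) (j-1)) → T (S i j)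
  overflow : ∀ i, 1 < i → i ≤ n → T (X i) → ¬ T (S (i-1) k)

lemma sat_seqCNF_iff_isModel (hn : 2 ≤ n) (hk : 1 ≤ k) {T : V → Prop} [DecidablePred T] :
    CNF.Sat (fun v => decide (T v)) (seqCNF n k) ↔ IsModel n k T := by
  constructor
  · intro h
    refine ⟨fun i hi hin => ?_, fun j hj hjk => ?_, fun i j hi hin hj hjk => ?_,
      fun i j hi hin hj hjk => ?_, fun i hi hin => ?_⟩
    · simpa [imp_iff_not_or] using h _ (mem_first hi hin)
    · simpa using h _ (mem_row_one hj hjk)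
    · simpa [imp_iff_not_or] using h _ (mem_carry hi hin hj hjk)
    · simpa [imp_iff_not_or] using h _ (mem_incr hi hin hj hjk)
    · simpa [imp_iff_not_or] using h _ (mem_overflow hi hin)
  · intro hM C hC
    rcases hC with rfl | ⟨j, hj, hjk, rfl⟩ | ⟨i, hi, hin, hC⟩ | rfl
    · simpa [imp_iff_not_or] using hM.first 1 le_rfl (by omega)
    · simpa using hM.row_one j hj hjk
    · rcases hC with rfl | rfl | ⟨j, hj, hjk, rfl | rfl⟩ | rfl
      · simpa [imp_iff_not_or] using hM.first i hi.le hin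
      · simpa [imp_iff_not_or] using hM.carry i 1 hi hin le_rfl hk
      · simpa [imp_iff_not_or] using hM.incr i j hi hin hj hjk
      · simpa [imp_iff_not_or] using hM.carry i j hi hin hj.le hjk
      · simpa [imp_iff_not_or] using hM.overflow i hi hin.le
    · simpa [imp_iff_not_or] using hM.overflow n (by omega) le_rfl

def count (a : V → Bool) (i : ℕ) : ℕ :=
  ((Finset.Icc 1 i).filter (fun t => a (X t) = true)).card

lemma atMostK_iff {a : V → Bool} : atMostK n k a ↔ count a n ≤ k := Iff.rfl

lemma count_succ (a : V → Bool) (i : ℕ) :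
    count a (i + 1) = count a i + if a (X (i + 1)) = true then 1 else 0 := by
  simp only [count, Finset.card_filter]
  exact Finset.sum_Icc_succ_top (by omega) _

lemma count_le_self (a : V → Bool) (i : ℕ) : count a i ≤ i :=
  (Finset.card_filter_le _ _).trans (by simp)

lemma count_mono (a : V → Bool) {i i' : ℕ} (h : i ≤ i') : count a i ≤ count a i' :=
  Finset.card_le_card (Finset.filter_subset_filter _ (Finset.Icc_subset_Icc_right h))

lemma count_congr {a b : V → Bool} (h : ∀ x ∈ inputs n, b x = a x) : count a n = count b n := by
  refine congrArg Finset.card (Finset.filter_congr fun t ht => ?_)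
  rw [Finset.mem_Icc] at ht
  rw [h (X t) ⟨t, ht.1, ht.2, rfl⟩]

lemma isModel_count (a : V → Bool) (ha : count a n ≤ k) :
    IsModel n k (Sum.elim (fun i => a (X i) = true) (fun p => p.2 ≤ count a p.1)) := by
  have hsucc : ∀ i, 1 ≤ i → a (X i) = true → count a i = count a (i - 1) + 1 := by
    intro i hi hx
    obtain ⟨i, rfl⟩ := Nat.exists_eq_add_of_le' hi
    simp [count_succ, hx]
  refine ⟨fun i hi _ hx => ?_, fun j hj _ => ?_, fun i j _ _ _ _ hs => ?_,
    fun i j hi _ _ _ hx hs => ?_, fun i hi hin hx hs => ?_⟩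
  · show 1 ≤ count a i
    rw [hsucc i hi hx]; omega
  · show ¬ j ≤ count a 1
    have := count_le_self a 1; omega
  · exact hs.trans (count_mono a (Nat.sub_le i 1))
  · show j ≤ count a i
    have hs : j - 1 ≤ count a (i - 1) := hs
    rw [hsucc i hi.le hx]; omega
  · have hs : k ≤ count a (i - 1) := hs
    have := count_mono a hin
    rw [hsucc i hi.le hx] at this; omega

lemma count_le_of_isModel (hk : 1 ≤ k) {b : V → Bool} (hM : IsModel n k (fun v => b v = true)) :
    ∀ i ≤ n, count b i ≤ k ∧ (i < n → ∀ j, 1 ≤ j → j ≤ count b i → b (S i j) = true) := by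
  intro i
  induction i with
  | zero =>
    simp only [count, Finset.Icc_eq_empty_of_lt zero_lt_one, Finset.filter_empty,
      Finset.card_empty]
    exact fun _ => ⟨Nat.zero_le k, fun _ j hj hj0 => absurd hj0 (by omega)⟩
  | succ m ih =>
    intro hm
    obtain ⟨hcount, hS⟩ := ih (by omega)
    have hS := hS (by omega)
    have hle := count_le_self b m
    by_cases hx : b (X (m + 1)) = true
    · have hsucc : count b (m + 1) = count b m + 1 := by simp [count_succ, hx]
      have hlt : count b m < k := by
        by_contra hge
        exact hM.overflow (m + 1) (by omega) hm hx (hS k hk (by omega))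
      refine ⟨by omega, fun hmn j hj hjc => ?_⟩
      obtain rfl | hj := hj.eq_or_lt
      · exact hM.first (m + 1) (by omega) hmn hx
      · exact hM.incr (m + 1) j (by omega) hmn hj (by omega) hx (hS (j - 1) (by omega) (by omega))
    · have hsucc : count b (m + 1) = count b m := by simp [count_succ, hx]
      refine ⟨by omega, fun hmn j hj hjc => ?_⟩
      exact hM.carry (m + 1) j (by omega) hmn hj (by omega) (hS j hj (by omega))

theorem isEncodingOn_seqCNF (hn : 2 ≤ n) (hk : 1 ≤ k) :
    IsEncodingOn (seqCNF n k) (inputs n) (atMostK n k) := by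
  classical
  intro a
  constructor
  · intro ha
    refine ⟨fun v => decide (Sum.elim (fun i => a (X i) = true) (fun p => p.2 ≤ count a p.1) v),
      ?_, (sat_seqCNF_iff_isModel hn hk).2 (isModel_count a ha)⟩
    rintro _ ⟨i, -, -, rfl⟩
    exact Bool.decide_eq_true
  · rintro ⟨b, hba, hb⟩
    have hM : IsModel n k (fun v => b v = true) :=
      (sat_seqCNF_iff_isModel hn hk).1 (by simpa using hb)
    rw [atMostK_iff, count_congr hba]
    exact (count_le_of_isModel hk hM n le_rfl).1

variable {ψ : CNF V} {T : Set V}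

def row : V → ℕ := Sum.elim id Prod.fst

inductive FwdClosure (n k : ℕ) (ψ : CNF V) (T : Set V) : V → Prop
  | derived {v : V} : UnitDeriv ψ {posL v} → FwdClosure n k ψ T v
  | seed {v : V} : v ∈ T → FwdClosure n k ψ T v
  | first {i : ℕ} : 1 ≤ i → i < n → FwdClosure n k ψ T (X i) → FwdClosure n k ψ T (S i 1)
  | carry {i j : ℕ} : 1 < i → i < n → 1 ≤ j → j ≤ k →
      FwdClosure n k ψ T (S (i-1) j) → FwdClosure n k ψ T (S i j)
  | incr {i j : ℕ} : 1 < i → i < n → 1 < j → j ≤ k → FwdClosure n k ψ T (X i) →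
      FwdClosure n k ψ T (S (i-1) (j-1)) → FwdClosure n k ψ T (S i j)

lemma fwdClosure_X_cases (h : FwdClosure n k ψ T (X i)) : UnitDeriv ψ {posL (X i)} ∨ X i ∈ T := by
  cases h with
  | derived h => exact Or.inl h
  | seed h => exact Or.inr h

/-- The row bound is what rules out a rule or an overflow clause with both premises due to
the seed. -/
lemma fwdClosure_blame (hψ : seqCNF n k ⊆ ψ) (hT : T.Subsingleton) {v : V}
    (h : FwdClosure n k ψ T v) :
    UnitDeriv ψ {posL v} ∨
      ∃ t ∈ T, row t ≤ row v ∧ (UnitDeriv ψ {negL v} → UnitDeriv ψ {negL t}) := by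
  induction h with
  | derived h => exact Or.inl h
  | seed h => exact Or.inr ⟨_, h, le_rfl, id⟩
  | @first i hi hin hx _ =>
    have hC := hψ (mem_first (k := k) hi hin)
    rcases fwdClosure_X_cases hx with hx | hx
    · exact Or.inl (hx.pos_of_imp hC)
    · exact Or.inr ⟨X i, hx, le_rfl, fun h => h.neg_of_imp hC⟩
  | carry hi hin hj hjk _ ih =>
    have hC := hψ (mem_carry hi hin hj hjk)
    rcases ih with hs | ⟨t, ht, hrow, hblame⟩
    · exact Or.inl (hs.pos_of_imp hC)
    · exact Or.inr ⟨t, ht, hrow.trans (Nat.sub_le _ _), fun h => hblame (h.neg_of_imp hC)⟩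
  | @incr i j hi hin hj hjk hx _ _ ih =>
    have hC := hψ (mem_incr hi hin hj hjk)
    rcases fwdClosure_X_cases hx with hx | hx <;> rcases ih with hs | ⟨t, ht, hrow, hblame⟩
    · exact Or.inl (UnitDeriv.pos_of_imp₂ hC hx hs)
    · exact Or.inr ⟨t, ht, hrow.trans (Nat.sub_le _ _),
        fun h => hblame (UnitDeriv.neg_right_of_imp₂ hC hx h)⟩
    · exact Or.inr ⟨X i, hx, le_rfl, UnitDeriv.neg_left_of_imp₂ hC hs⟩
    · rw [hT ht hx] at hrow
      exact absurd hrow (by simp only [row, X, S, Sum.elim_inl, Sum.elim_inr, id]; omega)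

lemma not_fwdClosure_of_neg (hψ : seqCNF n k ⊆ ψ) (hT : T.Subsingleton)
    (hbot : ¬ UnitDeriv ψ ∅) (hTneg : ∀ t ∈ T, ¬ UnitDeriv ψ {negL t}) {v : V}
    (hv : UnitDeriv ψ {negL v}) : ¬ FwdClosure n k ψ T v :=
  fun h => (fwdClosure_blame hψ hT h).elim (fun hp => hbot (hp.empty_of_compl hv))
    fun ⟨t, ht, _, hblame⟩ => hTneg t ht (hblame hv)

lemma isModel_fwdClosure (hψ : seqCNF n k ⊆ ψ) (hT : T.Subsingleton)
    (hbot : ¬ UnitDeriv ψ ∅) (hTneg : ∀ t ∈ T, ¬ UnitDeriv ψ {negL t}) :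
    IsModel n k (FwdClosure n k ψ T) where
  first _ := FwdClosure.first
  row_one _ hj hjk :=
    not_fwdClosure_of_neg hψ hT hbot hTneg (UnitDeriv.base (hψ (mem_row_one hj hjk)))
  carry _ _ := FwdClosure.carry
  incr _ _ := FwdClosure.incr
  overflow i hi hin hx hs := by
    have hC := hψ (mem_overflow (k := k) hi hin)
    rcases fwdClosure_X_cases hx with hx | hx
    · exact not_fwdClosure_of_neg hψ hT hbot hTneg (hx.neg_of_nand hC) hs
    · rcases fwdClosure_blame hψ hT hs with hs | ⟨t, ht, hrow, -⟩
      · exact hTneg _ hx (hs.neg_of_nand (Set.pair_comm _ _ ▸ hC))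
      · rw [hT ht hx] at hrow
        exact absurd hrow (by simp only [row, X, S, Sum.elim_inl, Sum.elim_inr, id]; omega)

open Classical in
lemma sat_fwdClosure (hn : 2 ≤ n) (hk : 1 ≤ k) {α : Set (Lit V)} (hT : T.Subsingleton)
    (hbot : ¬ UnitDeriv (seqCNF n k ∪ paUnits α) ∅)
    (hTneg : ∀ t ∈ T, ¬ UnitDeriv (seqCNF n k ∪ paUnits α) {negL t}) :
    CNF.Sat (fun v => decide (FwdClosure n k (seqCNF n k ∪ paUnits α) T v))
      (seqCNF n k ∪ paUnits α) := by
  have hψ : seqCNF n k ⊆ seqCNF n k ∪ paUnits α := Set.subset_union_left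
  rw [CNF.sat_union, sat_seqCNF_iff_isModel hn hk, CNF.sat_paUnits]
  refine ⟨isModel_fwdClosure hψ hT hbot hTneg, ?_⟩
  rintro ⟨v, _ | _⟩ hl
  · simpa [Lit.eval] using
      not_fwdClosure_of_neg hψ hT hbot hTneg (UnitDeriv.of_mem_paUnits (l := negL v) hl)
  · simpa [Lit.eval] using FwdClosure.derived (UnitDeriv.of_mem_paUnits (l := posL v) hl)

theorem pcon_seqCNF (hn : 2 ≤ n) (hk : 1 ≤ k) : PCon (seqCNF n k) (allVars n k) := by
  intro α _ _ l _ hent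
  by_contra! ⟨hl, hbot⟩
  set ψ := seqCNF n k ∪ paUnits α
  obtain ⟨w, _ | _⟩ := l
  · change ¬ UnitDeriv _ {negL w} at hl
    have hsat := sat_fwdClosure hn hk Set.subsingleton_singleton hbot (by simpa using hl)
    have hw : ¬ FwdClosure n k ψ {w} w := by simpa [Lit.eval] using hent _ hsat
    exact hw (FwdClosure.seed rfl)
  · change ¬ UnitDeriv _ {posL w} at hl
    have hsat := sat_fwdClosure hn hk (T := ∅) Set.subsingleton_empty hbot (by simp)
    have hw : FwdClosure n k ψ ∅ w := by simpa [Lit.eval] using hent _ hsat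
    rcases fwdClosure_blame Set.subset_union_left Set.subsingleton_empty hw with hw | ⟨t, ht, -⟩
    exacts [hl hw, ht]

end Seq

theorem stmt0_general (n k : ℕ) (hn : 2 ≤ n) (hk1 : 1 ≤ k) :
    IsEncodingOn (Seq.seqCNF n k) (Seq.inputs n) (Seq.atMostK n k) ∧
    PCon (Seq.seqCNF n k) (Seq.allVars n k) :=
  ⟨Seq.isEncodingOn_seqCNF hn hk1, Seq.pcon_seqCNF hn hk1⟩

/-- For every `n ≥ 2` and `n ≥ k ≥ 1`, the sequential encoding
`LT_SEQ^{n,k}` of the at-most-`k` constraint on `n` input variables is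
propagation complete. -/
theorem stmt0 (n k : ℕ) (hn : 2 ≤ n) (hk1 : 1 ≤ k) (hkn : k ≤ n) :
    IsEncodingOn (Seq.seqCNF n k) (Seq.inputs n) (Seq.atMostK n k) ∧
    PCon (Seq.seqCNF n k) (Seq.allVars n k) :=
  stmt0_general n k hn hk1
end

section
/- For every n ≥ 3, the formula μₙ(x₁,…,xₙ) is a propagation complete encoding of the at-most-one constraint AMO(x₁,…,xₙ) with 3n−6 clauses and n−3 auxiliary variables, and it contains no positive literal on any input variable. -/
set_option autoImplicit false

universe u v

/-- The at-most-one constraint on the variables in `x`. -/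
def AMOpred {V : Type u} (x : Set V) (a : V → Bool) : Prop :=
  ∀ u ∈ x, ∀ v ∈ x, a u = true → a v = true → u = v

namespace Mu

/-- Variables: `Sum.inl i` is the input variable `xᵢ` (for `1 ≤ i ≤ n`) and
`Sum.inr j` is the auxiliary variable `yⱼ` (for `1 ≤ j ≤ n-3`). -/
abbrev V : Type := ℕ ⊕ ℕ

def X (i : ℕ) : V := Sum.inl i
def Y (j : ℕ) : V := Sum.inr j

/-- The first argument of the `j`-th recursive occurrence of `μ`:
`A 0 = x₁` and `A j = yⱼ` for `j ≥ 1`. -/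
def A (j : ℕ) : V := if j = 0 then X 1 else Y j

/-- The formula `μₙ(x₁,…,xₙ)`, defined by: `μ₃(x₁,x₂,x₃)` consists of the three
clauses `(¬x₁∨¬x₂)(¬x₁∨¬x₃)(¬x₂∨¬x₃)` and for `n ≥ 4`
`μₙ(x₁,…,xₙ) = (¬x₁∨¬x₂)(¬x₁∨y₁)(¬x₂∨y₁) ∧ μ_{n−1}(y₁,x₃,…,xₙ)` with the fresh
auxiliary variables `y₁,…,y_{n-3}`.  The `j`-th unfolding step (`1 ≤ j ≤ n-3`)
contributes the clauses on `A (j-1)`, `x_{j+1}` and `yⱼ`, and the base case is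
`μ₃(A (n-3), x_{n-1}, xₙ)`. -/
def muCNF (n : ℕ) : CNF V :=
  {C | (∃ j, 1 ≤ j ∧ j ≤ n - 3 ∧
        (C = {negL (A (j-1)), negL (X (j+1))}
        ∨ C = {negL (A (j-1)), posL (Y j)}
        ∨ C = {negL (X (j+1)), posL (Y j)}))
    ∨ C = {negL (A (n-3)), negL (X (n-1))}
    ∨ C = {negL (A (n-3)), negL (X n)}
    ∨ C = {negL (X (n-1)), negL (X n)}}

/-- The input variables `x₁, …, xₙ`. -/
def Xset (n : ℕ) : Set V := {w | ∃ i, 1 ≤ i ∧ i ≤ n ∧ w = X i}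

/-- The auxiliary variables `y₁, …, y_{n-3}`. -/
def Yset (n : ℕ) : Set V := {w | ∃ j, 1 ≤ j ∧ j ≤ n - 3 ∧ w = Y j}

end Mu
namespace MuProof

open Mu

@[simp] lemma negate_negate (l : Lit Mu.V) : l.negate.negate = l := by
  simp [Lit.negate]

@[simp] lemma negL_eq_negL {v w : Mu.V} : negL v = negL w ↔ v = w := by
  simp [negL]

@[simp] lemma negL_ne_posL {v w : Mu.V} : negL v ≠ posL w := by
  simp [negL, posL]

@[simp] lemma posL_ne_negL {v w : Mu.V} : posL v ≠ negL w := by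
  simp [negL, posL]

@[simp] lemma posL_eq_posL {v w : Mu.V} : posL v = posL w ↔ v = w := by
  simp [posL]

@[simp] lemma negate_negL (v : Mu.V) : (negL v).negate = posL v := rfl
@[simp] lemma negate_posL (v : Mu.V) : (posL v).negate = negL v := rfl

@[simp] lemma X_eq_X {i i' : ℕ} : Mu.X i = Mu.X i' ↔ i = i' := by simp [Mu.X]
@[simp] lemma Y_eq_Y {j j' : ℕ} : Mu.Y j = Mu.Y j' ↔ j = j' := by simp [Mu.Y]
@[simp] lemma X_ne_Y {i j : ℕ} : Mu.X i ≠ Mu.Y j := by simp [Mu.X, Mu.Y]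
@[simp] lemma Y_ne_X {i j : ℕ} : Mu.Y j ≠ Mu.X i := by simp [Mu.X, Mu.Y]

@[simp] lemma A_eq_X {j i : ℕ} : Mu.A j = Mu.X i ↔ (j = 0 ∧ i = 1) := by
  unfold Mu.A; split <;> simp_all <;> omega

@[simp] lemma X_eq_A {j i : ℕ} : Mu.X i = Mu.A j ↔ (j = 0 ∧ i = 1) := by
  rw [eq_comm, A_eq_X]

@[simp] lemma A_eq_Y {j j' : ℕ} : Mu.A j = Mu.Y j' ↔ (j ≠ 0 ∧ j = j') := by
  unfold Mu.A; split <;> simp_all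

@[simp] lemma Y_eq_A {j j' : ℕ} : Mu.Y j' = Mu.A j ↔ (j ≠ 0 ∧ j = j') := by
  rw [eq_comm, A_eq_Y]

@[simp] lemma A_eq_A {j j' : ℕ} : Mu.A j = Mu.A j' ↔ j = j' := by
  unfold Mu.A; split <;> split <;> simp_all <;> omega

/-- shape of clauses: every clause is a 2-clause `{¬v, ⟨w,p⟩}` with `v ≠ w`. -/
lemma clause_shape {n : ℕ} (hn : 3 ≤ n) {C : Clause Mu.V} (hC : C ∈ muCNF n) :
    ∃ v w : Mu.V, ∃ p : Bool, v ≠ w ∧ C = {negL v, Lit.mk w p} := by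
  rcases hC with ⟨j, hj1, hj2, h | h | h⟩ | h | h | h
  · exact ⟨A (j-1), X (j+1), false, by simp; omega, h⟩
  · exact ⟨A (j-1), Y j, true, by simp; omega, h⟩
  · exact ⟨X (j+1), Y j, true, by simp, h⟩
  · exact ⟨A (n-3), X (n-1), false, by simp; omega, h⟩
  · exact ⟨A (n-3), X n, false, by simp; omega, h⟩
  · exact ⟨X (n-1), X n, false, by simp; omega, h⟩

end MuProof
namespace MuProof
open Mu

/-- single-antecedent implication derived from a binary clause of `μₙ`. -/
def Imp (n : ℕ) (k k' : Lit Mu.V) : Prop :=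
  ∃ C ∈ muCNF n, ∃ a b : Lit Mu.V, a.var ≠ b.var ∧ C = {a, b} ∧
    ((k = a.negate ∧ k' = b) ∨ (k = b.negate ∧ k' = a))

lemma Imp.contra {n : ℕ} {k k' : Lit Mu.V} (h : Imp n k k') :
    Imp n k'.negate k.negate := by
  obtain ⟨C, hC, a, b, hab, hCe, h | h⟩ := h
  · exact ⟨C, hC, a, b, hab, hCe, Or.inr ⟨by rw [h.2], by rw [h.1, negate_negate]⟩⟩
  · exact ⟨C, hC, a, b, hab, hCe, Or.inl ⟨by rw [h.2], by rw [h.1, negate_negate]⟩⟩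

/-- evaluation can not satisfy both a literal and its negation. -/
lemma eval_negate {σ : Mu.V → Bool} {k : Lit Mu.V} (h : Lit.eval σ k) :
    ¬ Lit.eval σ k.negate := by
  rw [Lit.eval] at h ⊢
  rw [Lit.negate]
  simp only [h]
  cases k.pos <;> simp

/-- a model transfers along implications. -/
lemma Imp.sat {n : ℕ} {σ : Mu.V → Bool} (hσ : CNF.Sat σ (muCNF n))
    {k k' : Lit Mu.V} (h : Imp n k k') (hk : Lit.eval σ k) : Lit.eval σ k' := by
  obtain ⟨C, hC, a, b, hab, hCe, h⟩ := h
  obtain ⟨l, hl, hle⟩ := hσ C hC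
  rw [hCe] at hl
  rcases h with ⟨hka, hkb⟩ | ⟨hka, hkb⟩ <;> subst hka hkb <;>
    rcases hl with rfl | rfl <;> first
    | exact hle
    | exact absurd hk (eval_negate hle)

/-- The all-false assignment is a model. -/
lemma sat_allFalse {n : ℕ} (hn : 3 ≤ n) : CNF.Sat (fun _ => false) (muCNF n) := by
  intro C hC
  obtain ⟨v, w, p, hvw, rfl⟩ := clause_shape hn hC
  exact ⟨negL v, by simp, rfl⟩

def aY : Mu.V → Bool := fun v => match v with | Sum.inl _ => false | Sum.inr _ => true

/-- The assignment with all y true and all x false is a model. -/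
lemma sat_allY {n : ℕ} : CNF.Sat aY (muCNF n) := by
  intro C hC
  rcases hC with ⟨j, hj1, hj2, rfl | rfl | rfl⟩ | rfl | rfl | rfl
  · exact ⟨negL (X (j+1)), by simp, rfl⟩
  · exact ⟨posL (Y j), by simp, rfl⟩
  · exact ⟨posL (Y j), by simp, rfl⟩
  · exact ⟨negL (X (n-1)), by simp, rfl⟩
  · exact ⟨negL (X n), by simp, rfl⟩
  · exact ⟨negL (X n), by simp, rfl⟩

/-- assignment making exactly `x i` true. -/
def uX (i : ℕ) : Mu.V → Bool := fun v => match v with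
  | Sum.inl k => decide (k = i)
  | Sum.inr j => decide (i ≤ j + 1)

lemma uX_X (i k : ℕ) : uX i (X k) = decide (k = i) := rfl
lemma uX_Y (i j : ℕ) : uX i (Y j) = decide (i ≤ j + 1) := rfl
lemma uX_A (i j : ℕ) (hi : 1 ≤ i) : uX i (A j) = decide (i ≤ j + 1) := by
  unfold Mu.A; split
  · rw [uX_X]; simp; omega
  · rw [uX_Y]

lemma sat_unitX {n i : ℕ} (hn : 3 ≤ n) (hi : 1 ≤ i) : CNF.Sat (uX i) (muCNF n) := by
  intro C hC
  rcases hC with ⟨j, hj1, hj2, rfl | rfl | rfl⟩ | rfl | rfl | rfl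
  · by_cases h : uX i (A (j-1)) = false
    · exact ⟨negL (A (j-1)), by simp, h⟩
    · refine ⟨negL (X (j+1)), by simp, ?_⟩
      rw [uX_A i _ hi] at h; show uX i (X (j+1)) = false; rw [uX_X]
      simp at h ⊢; omega
  · by_cases h : uX i (A (j-1)) = false
    · exact ⟨negL (A (j-1)), by simp, h⟩
    · refine ⟨posL (Y j), by simp, ?_⟩
      rw [uX_A i _ hi] at h; show uX i (Y j) = true; rw [uX_Y]
      simp at h ⊢; omega
  · by_cases h : uX i (X (j+1)) = false
    · exact ⟨negL (X (j+1)), by simp, h⟩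
    · refine ⟨posL (Y j), by simp, ?_⟩
      rw [uX_X] at h; show uX i (Y j) = true; rw [uX_Y]
      simp at h ⊢; omega
  · by_cases h : uX i (A (n-3)) = false
    · exact ⟨negL (A (n-3)), by simp, h⟩
    · refine ⟨negL (X (n-1)), by simp, ?_⟩
      rw [uX_A i _ hi] at h; show uX i (X (n-1)) = false; rw [uX_X]
      simp at h ⊢; omega
  · by_cases h : uX i (A (n-3)) = false
    · exact ⟨negL (A (n-3)), by simp, h⟩
    · refine ⟨negL (X n), by simp, ?_⟩
      rw [uX_A i _ hi] at h; show uX i (X n) = false; rw [uX_X]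
      simp at h ⊢; omega
  · by_cases h : uX i (X (n-1)) = false
    · exact ⟨negL (X (n-1)), by simp, h⟩
    · refine ⟨negL (X n), by simp, ?_⟩
      rw [uX_X] at h; show uX i (X n) = false; rw [uX_X]
      simp at h ⊢; omega

/-- every literal on the variables of the encoding has a model. -/
lemma modelFor {n : ℕ} (hn : 3 ≤ n) (m : Lit Mu.V)
    (hm : m.var ∈ Xset n ∪ Yset n) :
    ∃ σ : Mu.V → Bool, CNF.Sat σ (muCNF n) ∧ Lit.eval σ m := by
  obtain ⟨v, p⟩ := m
  cases p with
  | false => exact ⟨fun _ => false, sat_allFalse hn, rfl⟩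
  | true =>
    rcases hm with ⟨i, hi1, hi2, rfl⟩ | ⟨j, hj1, hj2, rfl⟩
    · refine ⟨uX i, sat_unitX hn hi1, ?_⟩
      show uX i (X i) = true; rw [uX_X]; simp
    · exact ⟨aY, sat_allY, rfl⟩

end MuProof
namespace MuProof
open Mu

/-- the formula together with the partial assignment. -/
def psi (n : ℕ) (α : Set (Lit Mu.V)) : CNF Mu.V := muCNF n ∪ paUnits α

/-- the set of unit-derivable literals. -/
def DD (n : ℕ) (α : Set (Lit Mu.V)) : Set (Lit Mu.V) :=
  {k | UnitDeriv (psi n α) {k}}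

section PC

variable {n : ℕ} {α : Set (Lit Mu.V)}

lemma alpha_subset_DD : α ⊆ DD n α := fun k hk =>
  UnitDeriv.base (Or.inr ⟨k, hk, rfl⟩)

lemma DD_closed {k k' : Lit Mu.V} (h : Imp n k k') (hk : k ∈ DD n α) :
    k' ∈ DD n α := by
  obtain ⟨C, hC, a, b, hab, hCe, hcase⟩ := h
  have hCd : UnitDeriv (psi n α) C := UnitDeriv.base (Or.inl hC)
  have hne : a ≠ b := fun h => hab (by rw [h])
  rcases hcase with ⟨hka, hkb⟩ | ⟨hka, hkb⟩
  · have hneg : UnitDeriv (psi n α) {a.negate} := by rw [← hka]; exact hk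
    have hstep := UnitDeriv.step a (show a ∈ C by rw [hCe]; simp) hCd hneg
    rw [hCe, Set.pair_diff_left hne, ← hkb] at hstep
    exact hstep
  · have hneg : UnitDeriv (psi n α) {b.negate} := by rw [← hka]; exact hk
    have hstep := UnitDeriv.step b (show b ∈ C by rw [hCe]; simp) hCd hneg
    rw [hCe, Set.pair_diff_right hne, ← hkb] at hstep
    exact hstep

lemma DD_empty {k : Lit Mu.V} (hk : k ∈ DD n α) (hk' : k.negate ∈ DD n α) :
    UnitDeriv (psi n α) ∅ := by
  have := UnitDeriv.step (φ := psi n α) (C := {k}) k rfl hk hk'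
  rwa [Set.diff_self] at this

/-- reachability in the implication graph. -/
def Reach (n : ℕ) : Lit Mu.V → Lit Mu.V → Prop := Relation.ReflTransGen (Imp n)

lemma Reach_DD {m k : Lit Mu.V} (h : Reach n m k) (hk : k.negate ∈ DD n α) :
    m.negate ∈ DD n α := by
  induction h with
  | refl => exact hk
  | tail hr himp ih => exact ih (DD_closed himp.contra hk)

lemma Reach_eval {σ : Mu.V → Bool} (hσ : CNF.Sat σ (muCNF n))
    {m k : Lit Mu.V} (h : Reach n m k) (hm : Lit.eval σ m) : Lit.eval σ k := by
  induction h with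
  | refl => exact hm
  | tail hr himp ih => exact himp.sat hσ ih

end PC

/-- Main propagation completeness result. -/
lemma muPC {n : ℕ} (hn : 3 ≤ n) : PCon (muCNF n) (Xset n ∪ Yset n) := by
  intro α hcons hlits l hl hent
  by_cases hbot : UnitDeriv (psi n α) ∅
  · exact Or.inr hbot
  by_cases hl1 : UnitDeriv (psi n α) {l}
  · exact Or.inl hl1
  exfalso
  classical
  set m : Lit Mu.V := l.negate with hm
  -- a model of μₙ satisfying m
  obtain ⟨σ, hσ, hσm⟩ := modelFor hn m (by rw [hm]; exact hl)
  set E : Set (Lit Mu.V) := DD n α ∪ {k | Reach n m k} with hE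
  -- E is consistent
  have hEcons : ∀ k ∈ E, k.negate ∉ E := by
    rintro k (hk | hk) (hk' | hk')
    · exact hbot (DD_empty hk hk')
    · have : m.negate ∈ DD n α := Reach_DD hk' (by rwa [negate_negate])
      rw [hm, negate_negate] at this
      exact hl1 this
    · have : m.negate ∈ DD n α := Reach_DD hk hk'
      rw [hm, negate_negate] at this
      exact hl1 this
    · exact eval_negate (Reach_eval hσ hk hσm) (Reach_eval hσ hk' hσm)
  -- E is closed under implication
  have hEclosed : ∀ k k', Imp n k k' → k ∈ E → k' ∈ E := by
    rintro k k' himp (hk | hk)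
    · exact Or.inl (DD_closed himp hk)
    · exact Or.inr (Relation.ReflTransGen.tail hk himp)
  -- the assignment induced by E
  set b : Mu.V → Bool := fun v => if posL v ∈ E then true else false with hb
  have hbT : ∀ v : Mu.V, b v = true ↔ posL v ∈ E := by
    intro v; by_cases hp : posL v ∈ E <;> simp [hb, hp]
  have hevalE : ∀ k ∈ E, Lit.eval b k := by
    rintro ⟨v, p⟩ hk
    cases p with
    | true => exact (hbT v).2 hk
    | false =>
      show b v = false
      rcases Bool.eq_false_or_eq_true (b v) with h | h
      · exact absurd ((hbT v).1 h) (fun hp => hEcons _ hp (by exact hk))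
      · exact h
  -- b is a model of ψ
  have hbsat : CNF.Sat b (psi n α) := by
    rintro C (hC | ⟨k, hk, rfl⟩)
    · obtain ⟨v, w, p, hvw, rfl⟩ := clause_shape hn hC
      rcases Bool.eq_false_or_eq_true (b v) with h | h
      · have hvE : posL v ∈ E := (hbT v).1 h
        have himp : Imp n (posL v) (Lit.mk w p) := by
          refine ⟨_, hC, negL v, Lit.mk w p, hvw, rfl, Or.inl ⟨rfl, rfl⟩⟩
        exact ⟨Lit.mk w p, by simp, hevalE _ (hEclosed _ _ himp hvE)⟩
      · exact ⟨negL v, by simp, h⟩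
    · exact ⟨k, rfl, hevalE _ (Or.inl (alpha_subset_DD hk))⟩
  -- contradiction with entailment
  have hbl : Lit.eval b l := hent b hbsat
  have hbm : Lit.eval b m := hevalE m (Or.inr Relation.ReflTransGen.refl)
  exact eval_negate hbl (by rwa [← hm])

end MuProof
namespace MuProof
open Mu

/-- the canonical extension of an assignment of the x's to the y's. -/
def enc (a : Mu.V → Bool) : Mu.V → Bool := fun v => match v with
  | Sum.inl i => a (Sum.inl i)
  | Sum.inr j => (List.range (j+2)).any (fun i => decide (1 ≤ i) && a (Sum.inl i))

lemma enc_X (a : Mu.V → Bool) (i : ℕ) : enc a (X i) = a (X i) := rfl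

lemma enc_A (a : Mu.V → Bool) (j : ℕ) :
    enc a (A j) = true ↔ ∃ i, 1 ≤ i ∧ i ≤ j + 1 ∧ a (X i) = true := by
  unfold Mu.A
  split
  · subst ‹j = 0›
    rw [enc_X]
    constructor
    · intro h; exact ⟨1, le_refl 1, le_refl 1, h⟩
    · rintro ⟨i, h1, h2, h⟩; have : i = 1 := by omega
      subst this; exact h
  · show ((List.range (j+2)).any (fun i => decide (1 ≤ i) && a (Sum.inl i))) = true ↔ _
    rw [List.any_eq_true]
    simp only [List.mem_range, Bool.and_eq_true, decide_eq_true_iff, Mu.X]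
    constructor
    · rintro ⟨i, h1, h2, h3⟩; exact ⟨i, h2, by omega, h3⟩
    · rintro ⟨i, h1, h2, h3⟩; exact ⟨i, by omega, h1, h3⟩

lemma amo_ne {n : ℕ} {a : Mu.V → Bool} (hf : AMOpred (Xset n) a)
    {i k : ℕ} (hi1 : 1 ≤ i) (hi2 : i ≤ n) (hk1 : 1 ≤ k) (hk2 : k ≤ n)
    (hai : a (X i) = true) (hak : a (X k) = true) : i = k := by
  have := hf (X i) ⟨i, hi1, hi2, rfl⟩ (X k) ⟨k, hk1, hk2, rfl⟩ hai hak
  simpa [Mu.X] using this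

lemma enc_sat {n : ℕ} (hn : 3 ≤ n) {a : Mu.V → Bool}
    (hf : AMOpred (Xset n) a) : CNF.Sat (enc a) (muCNF n) := by
  intro C hC
  rcases hC with ⟨j, hj1, hj2, rfl | rfl | rfl⟩ | rfl | rfl | rfl
  · by_cases h : enc a (A (j-1)) = true
    · obtain ⟨i, hi1, hi2, hi⟩ := (enc_A a (j-1)).1 h
      refine ⟨negL (X (j+1)), by simp, ?_⟩
      show enc a (X (j+1)) = false
      rw [enc_X]
      rcases Bool.eq_false_or_eq_true (a (X (j+1))) with h' | h'
      · have := amo_ne hf hi1 (by omega) (by omega) (by omega) hi h'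
        omega
      · exact h'
    · refine ⟨negL (A (j-1)), by simp, ?_⟩
      show enc a (A (j-1)) = false
      simpa using h
  · by_cases h : enc a (A (j-1)) = true
    · obtain ⟨i, hi1, hi2, hi⟩ := (enc_A a (j-1)).1 h
      refine ⟨posL (Y j), by simp, ?_⟩
      show enc a (Y j) = true
      have : Mu.Y j = Mu.A j := (A_eq_Y.mpr ⟨by omega, rfl⟩).symm
      rw [this, enc_A]
      exact ⟨i, hi1, by omega, hi⟩
    · refine ⟨negL (A (j-1)), by simp, ?_⟩
      show enc a (A (j-1)) = false
      simpa using h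
  · by_cases h : a (X (j+1)) = true
    · refine ⟨posL (Y j), by simp, ?_⟩
      show enc a (Y j) = true
      have : Mu.Y j = Mu.A j := (A_eq_Y.mpr ⟨by omega, rfl⟩).symm
      rw [this, enc_A]
      exact ⟨j+1, by omega, by omega, h⟩
    · refine ⟨negL (X (j+1)), by simp, ?_⟩
      show enc a (X (j+1)) = false
      rw [enc_X]; simpa using h
  · by_cases h : enc a (A (n-3)) = true
    · obtain ⟨i, hi1, hi2, hi⟩ := (enc_A a (n-3)).1 h
      refine ⟨negL (X (n-1)), by simp, ?_⟩
      show enc a (X (n-1)) = false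
      rw [enc_X]
      rcases Bool.eq_false_or_eq_true (a (X (n-1))) with h' | h'
      · have := amo_ne hf hi1 (by omega) (by omega) (by omega) hi h'
        omega
      · exact h'
    · refine ⟨negL (A (n-3)), by simp, ?_⟩
      show enc a (A (n-3)) = false
      simpa using h
  · by_cases h : enc a (A (n-3)) = true
    · obtain ⟨i, hi1, hi2, hi⟩ := (enc_A a (n-3)).1 h
      refine ⟨negL (X n), by simp, ?_⟩
      show enc a (X n) = false
      rw [enc_X]
      rcases Bool.eq_false_or_eq_true (a (X n)) with h' | h'
      · have := amo_ne hf hi1 (by omega) (by omega) (le_refl n) hi h'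
        omega
      · exact h'
    · refine ⟨negL (A (n-3)), by simp, ?_⟩
      show enc a (A (n-3)) = false
      simpa using h
  · by_cases h : a (X (n-1)) = true
    · refine ⟨negL (X n), by simp, ?_⟩
      show enc a (X n) = false
      rw [enc_X]
      rcases Bool.eq_false_or_eq_true (a (X n)) with h' | h'
      · have := amo_ne hf (by omega) (by omega) (by omega) (le_refl n) h h'
        omega
      · exact h'
    · refine ⟨negL (X (n-1)), by simp, ?_⟩
      show enc a (X (n-1)) = false
      rw [enc_X]; simpa using h

/-- key chain lemma for the backward direction. -/
lemma chain {n : ℕ} (hn : 3 ≤ n) {b : Mu.V → Bool} (hb : CNF.Sat b (muCNF n)) :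
    ∀ j, ∀ i, 1 ≤ i → i ≤ j + 1 → j ≤ n - 3 → b (X i) = true → b (A j) = true := by
  intro j
  induction j with
  | zero =>
    intro i h1 h2 _ h
    have : i = 1 := by omega
    subst this
    exact h
  | succ j ih =>
    intro i h1 h2 hj h
    have hin : Clause.Sat b {negL (A j), posL (Y (j+1))} ∧
        Clause.Sat b {negL (X (j+2)), posL (Y (j+1))} := by
      constructor
      · refine hb _ (Or.inl ⟨j+1, by omega, by omega, Or.inr (Or.inl ?_)⟩)
        norm_num
      · refine hb _ (Or.inl ⟨j+1, by omega, by omega, Or.inr (Or.inr ?_)⟩)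
        norm_num
    have hAY : Mu.A (j+1) = Mu.Y (j+1) := by simp [Mu.A]
    by_cases hcase : i = j + 2
    · subst hcase
      obtain ⟨l, hl, hle⟩ := hin.2
      rcases hl with rfl | rfl
      · exfalso; rw [Lit.eval, negL] at hle; simp at hle; rw [h] at hle; exact Bool.noConfusion hle
      · rw [hAY]; exact hle
    · have hAj : b (A j) = true := ih i h1 (by omega) (by omega) h
      obtain ⟨l, hl, hle⟩ := hin.1
      rcases hl with rfl | rfl
      · exfalso; rw [Lit.eval, negL] at hle; simp at hle; rw [hAj] at hle; exact Bool.noConfusion hle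
      · rw [hAY]; exact hle

/-- two distinct true x's contradict satisfaction. -/
lemma two_true_false {n : ℕ} (hn : 3 ≤ n) {b : Mu.V → Bool}
    (hb : CNF.Sat b (muCNF n)) {i i' : ℕ} (h1 : 1 ≤ i) (hlt : i < i') (h2 : i' ≤ n)
    (hbi : b (X i) = true) (hbi' : b (X i') = true) : False := by
  have negsat : ∀ v w : Mu.V, Clause.Sat b {negL v, negL w} →
      b v = true → b w = true → False := by
    intro v w hs hv hw
    obtain ⟨l, hl, hle⟩ := hs
    rcases hl with rfl | rfl <;>
      (rw [Lit.eval, negL] at hle; simp at hle; simp_all)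
  by_cases hc1 : i' ≤ n - 2
  · have hA : b (A (i'-2)) = true := chain hn hb (i'-2) i h1 (by omega) (by omega) hbi
    have hcl : Clause.Sat b {negL (A (i'-1-1)), negL (X (i'-1+1))} :=
      hb _ (Or.inl ⟨i'-1, by omega, by omega, Or.inl rfl⟩)
    have e1 : i' - 1 - 1 = i' - 2 := by omega
    have e2 : i' - 1 + 1 = i' := by omega
    rw [e1, e2] at hcl
    exact negsat _ _ hcl hA hbi'
  by_cases hc2 : i' = n - 1
  · subst hc2
    by_cases hc : i ≤ n - 2
    · have hA : b (A (n-3)) = true := chain hn hb (n-3) i h1 (by omega) (by omega) hbi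
      have hcl : Clause.Sat b {negL (A (n-3)), negL (X (n-1))} :=
        hb _ (Or.inr (Or.inl rfl))
      exact negsat _ _ hcl hA hbi'
    · omega
  · have hc3 : i' = n := by omega
    rw [hc3] at hbi'
    by_cases hc : i ≤ n - 2
    · have hA : b (A (n-3)) = true := chain hn hb (n-3) i h1 (by omega) (by omega) hbi
      have hcl : Clause.Sat b {negL (A (n-3)), negL (X n)} :=
        hb _ (Or.inr (Or.inr (Or.inl rfl)))
      exact negsat _ _ hcl hA hbi'
    · have hc4 : i = n - 1 := by omega
      rw [hc4] at hbi
      have hcl : Clause.Sat b {negL (X (n-1)), negL (X n)} :=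
        hb _ (Or.inr (Or.inr (Or.inr rfl)))
      exact negsat _ _ hcl hbi hbi'

lemma muEncoding {n : ℕ} (hn : 3 ≤ n) :
    IsEncodingOn (muCNF n) (Xset n) (AMOpred (Xset n)) := by
  intro a
  constructor
  · intro hf
    refine ⟨enc a, ?_, enc_sat hn hf⟩
    rintro x ⟨i, h1, h2, rfl⟩
    exact enc_X a i
  · rintro ⟨b, hagree, hbsat⟩
    rintro u ⟨i, hi1, hi2, rfl⟩ v ⟨k, hk1, hk2, rfl⟩ hau hav
    have hbi : b (X i) = true := by rw [hagree _ ⟨i, hi1, hi2, rfl⟩]; exact hau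
    have hbk : b (X k) = true := by rw [hagree _ ⟨k, hk1, hk2, rfl⟩]; exact hav
    rcases lt_trichotomy i k with h | h | h
    · exact absurd (two_true_false hn hbsat hi1 h hk2 hbi hbk) (fun x => x)
    · rw [h]
    · exact absurd (two_true_false hn hbsat hk1 h hi2 hbk hbi) (fun x => x)

end MuProof
namespace MuProof
open Mu

def fam (j r : ℕ) : Clause Mu.V := match r with
  | 0 => {negL (A (j-1)), negL (X (j+1))}
  | 1 => {negL (A (j-1)), posL (Y j)}
  | _ => {negL (X (j+1)), posL (Y j)}

def bas (n r : ℕ) : Clause Mu.V := match r with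
  | 0 => {negL (A (n-3)), negL (X (n-1))}
  | 1 => {negL (A (n-3)), negL (X n)}
  | _ => {negL (X (n-1)), negL (X n)}

def G (n k : ℕ) : Clause Mu.V := if k / 3 = n - 2 then bas n (k % 3) else fam (k / 3) (k % 3)

def Gc (n j r : ℕ) : Clause Mu.V := if j = n - 2 then bas n r else fam j r

lemma Gc_inj {n : ℕ} (hn : 3 ≤ n) {j r j' r' : ℕ} (hr : r < 3) (hr' : r' < 3)
    (hj1 : 1 ≤ j) (hj2 : j ≤ n - 2) (hj1' : 1 ≤ j') (hj2' : j' ≤ n - 2)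
    (heq : Gc n j r = Gc n j' r') : j = j' ∧ r = r' := by
  unfold Gc at heq
  split_ifs at heq with h h'
  all_goals (interval_cases r <;> interval_cases r' <;>
    (simp [fam, bas, Set.pair_eq_pair_iff] at heq <;> omega))

lemma muCNF_eq {n : ℕ} (hn : 3 ≤ n) :
    muCNF n = G n '' Set.Icc 3 (3 * n - 4) := by
  ext C
  constructor
  · intro hC
    have code : ∀ j r : ℕ, r < 3 → 1 ≤ j → j ≤ n - 2 →
        ∃ k ∈ Set.Icc 3 (3 * n - 4), G n k = Gc n j r := by
      intro j r hr hj1 hj2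
      refine ⟨3 * j + r, ⟨by omega, by omega⟩, ?_⟩
      have h1 : (3 * j + r) / 3 = j := by omega
      have h2 : (3 * j + r) % 3 = r := by omega
      rw [G, h1, h2, Gc]
    rcases hC with ⟨j, hj1, hj2, rfl | rfl | rfl⟩ | rfl | rfl | rfl
    · obtain ⟨k, hk, hG⟩ := code j 0 (by omega) hj1 (by omega)
      exact ⟨k, hk, by rw [hG, Gc, if_neg (by omega)]; rfl⟩
    · obtain ⟨k, hk, hG⟩ := code j 1 (by omega) hj1 (by omega)
      exact ⟨k, hk, by rw [hG, Gc, if_neg (by omega)]; rfl⟩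
    · obtain ⟨k, hk, hG⟩ := code j 2 (by omega) hj1 (by omega)
      exact ⟨k, hk, by rw [hG, Gc, if_neg (by omega)]; rfl⟩
    · obtain ⟨k, hk, hG⟩ := code (n-2) 0 (by omega) (by omega) (by omega)
      exact ⟨k, hk, by rw [hG, Gc, if_pos rfl]; rfl⟩
    · obtain ⟨k, hk, hG⟩ := code (n-2) 1 (by omega) (by omega) (by omega)
      exact ⟨k, hk, by rw [hG, Gc, if_pos rfl]; rfl⟩
    · obtain ⟨k, hk, hG⟩ := code (n-2) 2 (by omega) (by omega) (by omega)
      exact ⟨k, hk, by rw [hG, Gc, if_pos rfl]; rfl⟩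
  · rintro ⟨k, ⟨hk1, hk2⟩, rfl⟩
    have hr : k % 3 < 3 := by omega
    have hj1 : 1 ≤ k / 3 := by omega
    have hj2 : k / 3 ≤ n - 2 := by omega
    rw [G]
    by_cases h : k / 3 = n - 2
    · rw [if_pos h]
      interval_cases hrv : (k % 3)
      · exact Or.inr (Or.inl rfl)
      · exact Or.inr (Or.inr (Or.inl rfl))
      · exact Or.inr (Or.inr (Or.inr rfl))
    · rw [if_neg h]
      refine Or.inl ⟨k / 3, hj1, by omega, ?_⟩
      interval_cases hrv : (k % 3)
      · exact Or.inl rfl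
      · exact Or.inr (Or.inl rfl)
      · exact Or.inr (Or.inr rfl)

lemma muCNF_ncard {n : ℕ} (hn : 3 ≤ n) : (muCNF n).ncard = 3 * n - 6 := by
  rw [muCNF_eq hn]
  rw [Set.ncard_image_of_injOn]
  · rw [← Finset.coe_Icc, Set.ncard_coe_finset, Nat.card_Icc]
    omega
  · rintro k ⟨hk1, hk2⟩ k' ⟨hk1', hk2'⟩ heq
    have hGc : G n k = Gc n (k/3) (k%3) := by
      rw [G, Gc]
    have hGc' : G n k' = Gc n (k'/3) (k'%3) := by
      rw [G, Gc]
    rw [hGc, hGc'] at heq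
    have := Gc_inj hn (by omega) (by omega) (by omega) (by omega) (by omega) (by omega) heq
    omega

end MuProof
namespace MuProof
open Mu

lemma A_casesOn (j : ℕ) : (j = 0 ∧ A j = X 1) ∨ (j ≠ 0 ∧ A j = Y j) := by
  unfold Mu.A; split
  · exact Or.inl ⟨‹_›, rfl⟩
  · exact Or.inr ⟨‹_›, rfl⟩

lemma X_mem_Xset {n i : ℕ} (h1 : 1 ≤ i) (h2 : i ≤ n) : Mu.X i ∈ Xset n := ⟨i, h1, h2, rfl⟩

lemma Y_notMem_Xset {n j : ℕ} : Mu.Y j ∉ Xset n := by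
  rintro ⟨i, h1, h2, h⟩
  exact (X_ne_Y h.symm)

lemma A_mem {n j : ℕ} (hn : 3 ≤ n) (hj : j ≤ n - 3) : A j ∈ Xset n ∪ Yset n := by
  rcases A_casesOn j with ⟨h0, hA⟩ | ⟨h0, hA⟩
  · rw [hA]; exact Or.inl (X_mem_Xset (le_refl 1) (by omega))
  · rw [hA]; exact Or.inr ⟨j, by omega, hj, rfl⟩

lemma vars_diff {n : ℕ} (hn : 3 ≤ n) : CNF.vars (muCNF n) \ Xset n = Yset n := by
  ext v
  constructor
  · rintro ⟨hv, hnx⟩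
    simp only [CNF.vars, Set.mem_iUnion] at hv
    obtain ⟨C, hC, l, hl, rfl⟩ := hv
    have hXcase : ∀ i : ℕ, 1 ≤ i → i ≤ n → l.var = Mu.X i → False := by
      intro i h1 h2 h
      exact hnx (h ▸ X_mem_Xset h1 h2)
    have hAcase : ∀ j : ℕ, j ≤ n - 3 → l.var = Mu.A j → l.var ∈ Yset n := by
      intro j hj h
      rcases A_casesOn j with ⟨h0, hA⟩ | ⟨h0, hA⟩
      · exact absurd (h.trans hA) (fun he => hXcase 1 (le_refl 1) (by omega) he)
      · rw [h, hA]; exact ⟨j, by omega, hj, rfl⟩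
    rcases hC with ⟨j, hj1, hj2, rfl | rfl | rfl⟩ | rfl | rfl | rfl <;>
      rcases hl with rfl | rfl
    · exact hAcase (j-1) (by omega) rfl
    · exact absurd rfl (hXcase (j+1) (by omega) (by omega))
    · exact hAcase (j-1) (by omega) rfl
    · exact ⟨j, hj1, hj2, rfl⟩
    · exact absurd rfl (hXcase (j+1) (by omega) (by omega))
    · exact ⟨j, hj1, hj2, rfl⟩
    · exact hAcase (n-3) (le_refl _) rfl
    · exact absurd rfl (hXcase (n-1) (by omega) (by omega))
    · exact hAcase (n-3) (le_refl _) rfl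
    · exact absurd rfl (hXcase n (by omega) (le_refl n))
    · exact absurd rfl (hXcase (n-1) (by omega) (by omega))
    · exact absurd rfl (hXcase n (by omega) (le_refl n))
  · rintro ⟨j, hj1, hj2, rfl⟩
    constructor
    · simp only [CNF.vars, Set.mem_iUnion]
      refine ⟨{negL (A (j-1)), posL (Y j)}, Or.inl ⟨j, hj1, hj2, Or.inr (Or.inl rfl)⟩,
        posL (Y j), by simp, rfl⟩
    · exact Y_notMem_Xset

lemma Yset_ncard {n : ℕ} : (Yset n).ncard = n - 3 := by
  have : Yset n = Sum.inr '' (Set.Icc 1 (n-3)) := by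
    ext v
    constructor
    · rintro ⟨j, h1, h2, rfl⟩; exact ⟨j, ⟨h1, h2⟩, rfl⟩
    · rintro ⟨j, ⟨h1, h2⟩, rfl⟩; exact ⟨j, h1, h2, rfl⟩
  rw [this, Set.ncard_image_of_injective _ Sum.inr_injective,
    ← Finset.coe_Icc, Set.ncard_coe_finset, Nat.card_Icc]
  omega

lemma no_posX {n : ℕ} : ∀ C ∈ muCNF n, ∀ l ∈ C, l.var ∈ Xset n → l.pos = false := by
  intro C hC l hl hx
  rcases hC with ⟨j, hj1, hj2, rfl | rfl | rfl⟩ | rfl | rfl | rfl <;>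
    rcases hl with rfl | rfl <;> first
    | rfl
    | exact absurd hx Y_notMem_Xset

end MuProof

/-- For every `n ≥ 3`, the formula `μₙ(x₁,…,xₙ)` is a
propagation complete encoding of the at-most-one constraint `AMO(x₁,…,xₙ)`
with `3n−6` clauses and `n−3` auxiliary variables, and it contains no positive
literal on any input variable. -/
theorem stmt2 (n : ℕ) (hn : 3 ≤ n) :
    IsEncodingOn (Mu.muCNF n) (Mu.Xset n) (AMOpred (Mu.Xset n)) ∧
    PCon (Mu.muCNF n) (Mu.Xset n ∪ Mu.Yset n) ∧
    (Mu.muCNF n).ncard = 3 * n - 6 ∧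
    (CNF.vars (Mu.muCNF n) \ Mu.Xset n).ncard = n - 3 ∧
    (∀ C ∈ Mu.muCNF n, ∀ l ∈ C, l.var ∈ Mu.Xset n → l.pos = false) := by
  refine ⟨MuProof.muEncoding hn, MuProof.muPC hn, MuProof.muCNF_ncard hn, ?_, MuProof.no_posX⟩
  rw [MuProof.vars_diff hn, MuProof.Yset_ncard]
end

section
/- Let ε(x₁,x₂,x₃,x₄) be the CNF formula with auxiliary variable y consisting of the clauses (¬x₁∨¬x₂), (¬x₁∨y), (¬x₂∨y), (¬y∨¬x₃), (¬y∨¬x₄), (¬x₃∨¬x₄), and (x₁∨x₂∨x₃∨x₄). Then ε is an encoding of the exactly-one constraint EO(x₁,x₂,x₃,x₄); moreover ε ∧ ¬x₃ ∧ ¬x₄ ⊨ y, but unit propagation on ε ∧ ¬x₃ ∧ ¬x₄ derives neither y nor the empty clause; hence ε is not a propagation complete encoding. -/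
set_option autoImplicit false

universe u v

namespace Eps4

/-- Variables: `0,1,2,3` are `x₁,x₂,x₃,x₄` and `4` is the auxiliary variable `y`. -/
abbrev V : Type := Fin 5

/-- The encoding `ε(x₁,x₂,x₃,x₄)` of the exactly-one constraint, consisting of
the clauses `(¬x₁∨¬x₂)(¬x₁∨y)(¬x₂∨y)(¬y∨¬x₃)(¬y∨¬x₄)(¬x₃∨¬x₄)(x₁∨x₂∨x₃∨x₄)`. -/
def eps : CNF V :=
  {{negL 0, negL 1}, {negL 0, posL 4}, {negL 1, posL 4},
   {negL 4, negL 2}, {negL 4, negL 3}, {negL 2, negL 3},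
   {posL 0, posL 1, posL 2, posL 3}}

/-- The partial assignment `¬x₃ ∧ ¬x₄`. -/
def alpha : Set (Lit V) := {negL 2, negL 3}

/-- The input variables `x₁, x₂, x₃, x₄`. -/
def Xset : Set V := {0, 1, 2, 3}

end Eps4


section Helpers

instance : DecidableEq (Lit Eps4.V) := fun a b =>
  decidable_of_iff (a.var = b.var ∧ a.pos = b.pos) (by cases a; cases b; simp)

instance : Fintype (Lit Eps4.V) :=
  Fintype.ofEquiv (Fin 5 × Bool)
    ⟨fun p => ⟨p.1, p.2⟩, fun l => (l.var, l.pos), fun _ => rfl, fun _ => rfl⟩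

def myA1 : Eps4.V → Bool := fun _ => false
def myA2 : Eps4.V → Bool := ![true, false, false, false, true]
def myA3 : Eps4.V → Bool := ![false, true, false, false, true]

lemma lit_eval_contra {W : Type u} {a : W → Bool} {l : Lit W}
    (h1 : Lit.eval a l) (h2 : Lit.eval a (Lit.negate l)) : False := by
  obtain ⟨v, p⟩ := l
  simp only [Lit.eval, Lit.negate] at h1 h2
  rw [h1] at h2
  cases p <;> simp at h2

lemma unitDeriv_sound {W : Type u} {φ : CNF W} {a : W → Bool} (ha : CNF.Sat a φ)
    {C : Clause W} (h : UnitDeriv φ C) : Clause.Sat a C := by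
  induction h with
  | base h => exact ha _ h
  | step l hl _ _ ihC ihneg =>
    obtain ⟨w, hw, hew⟩ := ihC
    obtain ⟨u, hu, heu⟩ := ihneg
    rw [Set.mem_singleton_iff] at hu; subst hu
    refine ⟨w, ⟨hw, ?_⟩, hew⟩
    intro hwl; rw [Set.mem_singleton_iff] at hwl; subst hwl
    exact lit_eval_contra hew heu

lemma phi_eq : Eps4.eps ∪ paUnits Eps4.alpha =
    ({{negL 0, negL 1}, {negL 0, posL 4}, {negL 1, posL 4},
      {negL 4, negL 2}, {negL 4, negL 3}, {negL 2, negL 3},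
      {posL 0, posL 1, posL 2, posL 3}, {negL 2}, {negL 3}} : CNF Eps4.V) := by
  ext C
  simp [Eps4.eps, Eps4.alpha, paUnits]
  tauto

lemma sat_phi2 : CNF.Sat myA2 (Eps4.eps ∪ paUnits Eps4.alpha) := by
  rw [phi_eq]
  intro C hC
  simp only [Set.mem_insert_iff, Set.mem_singleton_iff] at hC
  rcases hC with rfl|rfl|rfl|rfl|rfl|rfl|rfl|rfl|rfl <;>
    simp [Clause.Sat, Lit.eval, negL, posL, myA2]

lemma sat_phi3 : CNF.Sat myA3 (Eps4.eps ∪ paUnits Eps4.alpha) := by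
  rw [phi_eq]
  intro C hC
  simp only [Set.mem_insert_iff, Set.mem_singleton_iff] at hC
  rcases hC with rfl|rfl|rfl|rfl|rfl|rfl|rfl|rfl|rfl <;>
    simp [Clause.Sat, Lit.eval, negL, posL, myA3]

lemma eps4_deriv_inv {C : Clause Eps4.V}
    (h : UnitDeriv (Eps4.eps ∪ paUnits Eps4.alpha) C) :
    Clause.Sat myA1 C ∨ ({posL 0, posL 1} : Set (Lit Eps4.V)) ⊆ C := by
  induction h with
  | base hC =>
    rw [phi_eq] at hC
    simp only [Set.mem_insert_iff, Set.mem_singleton_iff] at hC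
    rcases hC with rfl|rfl|rfl|rfl|rfl|rfl|rfl|rfl|rfl
    · exact Or.inl ⟨negL 0, by simp, rfl⟩
    · exact Or.inl ⟨negL 0, by simp, rfl⟩
    · exact Or.inl ⟨negL 1, by simp, rfl⟩
    · exact Or.inl ⟨negL 4, by simp, rfl⟩
    · exact Or.inl ⟨negL 4, by simp, rfl⟩
    · exact Or.inl ⟨negL 2, by simp, rfl⟩
    · exact Or.inr (by intro m hm; simp only [Set.mem_insert_iff, Set.mem_singleton_iff] at hm; rcases hm with rfl|rfl <;> simp)
    · exact Or.inl ⟨negL 2, by simp, rfl⟩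
    · exact Or.inl ⟨negL 3, by simp, rfl⟩
  | step l hl hC hneg ihC ihneg =>
    obtain ⟨u, hu, heu2⟩ := unitDeriv_sound sat_phi2 hneg
    rw [Set.mem_singleton_iff] at hu; subst hu
    obtain ⟨u, hu, heu3⟩ := unitDeriv_sound sat_phi3 hneg
    rw [Set.mem_singleton_iff] at hu; subst hu
    have h1 : Lit.eval myA1 (Lit.negate l) := by
      rcases ihneg with hs | hsub
      · obtain ⟨u, hu, heu1⟩ := hs
        rw [Set.mem_singleton_iff] at hu; subst hu; exact heu1
      · exfalso
        have e0 := hsub (show posL 0 ∈ ({posL 0, posL 1} : Set (Lit Eps4.V)) by simp)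
        have e1 := hsub (show posL 1 ∈ ({posL 0, posL 1} : Set (Lit Eps4.V)) by simp)
        rw [Set.mem_singleton_iff] at e0 e1
        exact absurd (e0.trans e1.symm) (by decide)
    have hl23 : l = posL 2 ∨ l = posL 3 := by
      obtain ⟨v, p⟩ := l
      simp only [Lit.eval, Lit.negate, myA1, myA2, myA3] at h1 heu2 heu3
      fin_cases v <;> simp_all [posL]
    rcases ihC with hs | hsub
    · obtain ⟨w, hw, hew⟩ := hs
      refine Or.inl ⟨w, ⟨hw, ?_⟩, hew⟩
      intro hwl; rw [Set.mem_singleton_iff] at hwl; subst hwl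
      exact lit_eval_contra hew h1
    · refine Or.inr ?_
      intro m hm
      simp only [Set.mem_insert_iff, Set.mem_singleton_iff] at hm
      rcases hm with rfl | rfl
      · exact ⟨hsub (by simp), by rcases hl23 with rfl|rfl <;> simp only [Set.mem_singleton_iff] <;> decide⟩
      · exact ⟨hsub (by simp), by rcases hl23 with rfl|rfl <;> simp only [Set.mem_singleton_iff] <;> decide⟩

lemma sat_eps_iff (a : Eps4.V → Bool) :
    CNF.Sat a Eps4.eps ↔
      ((a 0 = false ∨ a 1 = false) ∧ (a 0 = false ∨ a 4 = true) ∧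
       (a 1 = false ∨ a 4 = true) ∧ (a 4 = false ∨ a 2 = false) ∧
       (a 4 = false ∨ a 3 = false) ∧ (a 2 = false ∨ a 3 = false) ∧
       (a 0 = true ∨ a 1 = true ∨ a 2 = true ∨ a 3 = true)) := by
  simp [CNF.Sat, Eps4.eps, Clause.Sat, Lit.eval, negL, posL]

lemma entails_y : CNF.Entails (Eps4.eps ∪ paUnits Eps4.alpha) (posL 4) := by
  intro a ha
  rw [phi_eq] at ha
  have h2 := ha _ (show ({negL 2} : Clause Eps4.V) ∈ _ by simp)
  have h3 := ha _ (show ({negL 3} : Clause Eps4.V) ∈ _ by simp)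
  have hbig := ha _ (show ({posL 0, posL 1, posL 2, posL 3} : Clause Eps4.V) ∈ _ by simp)
  have h01a := ha _ (show ({negL 0, posL 4} : Clause Eps4.V) ∈ _ by simp)
  have h01b := ha _ (show ({negL 1, posL 4} : Clause Eps4.V) ∈ _ by simp)
  simp only [Clause.Sat, Set.mem_insert_iff, Set.mem_singleton_iff, Lit.eval, negL, posL,
    exists_eq_or_imp, exists_eq_left] at h2 h3 hbig h01a h01b ⊢
  rcases hbig with h|h|h|h <;> rcases h01a with g|g <;> rcases h01b with f|f <;> simp_all

lemma no_deriv_y : ¬ UnitDeriv (Eps4.eps ∪ paUnits Eps4.alpha) {posL 4} := by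
  intro h
  rcases eps4_deriv_inv h with ⟨w, hw, hew⟩ | hsub
  · rw [Set.mem_singleton_iff] at hw; subst hw
    simp [Lit.eval, myA1, posL] at hew
  · have := hsub (show posL 0 ∈ ({posL 0, posL 1} : Set (Lit Eps4.V)) by simp)
    rw [Set.mem_singleton_iff] at this
    exact absurd this (by decide)

lemma no_deriv_bot : ¬ UnitDeriv (Eps4.eps ∪ paUnits Eps4.alpha) ∅ := by
  intro h
  obtain ⟨w, hw, -⟩ := unitDeriv_sound sat_phi2 h
  exact hw

end Helpers

/-- The formula `ε` is an encoding of the exactly-one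
constraint `EO(x₁,x₂,x₃,x₄)`; moreover `ε ∧ ¬x₃ ∧ ¬x₄ ⊨ y`, but unit
propagation on `ε ∧ ¬x₃ ∧ ¬x₄` derives neither `y` nor the empty clause;
hence `ε` is not a propagation complete encoding. -/
theorem stmt3 :
    IsEncodingOn Eps4.eps Eps4.Xset
      (fun a => ∃! v, v ∈ Eps4.Xset ∧ a v = true) ∧
    CNF.Entails (Eps4.eps ∪ paUnits Eps4.alpha) (posL 4) ∧
    ¬ UnitDeriv (Eps4.eps ∪ paUnits Eps4.alpha) {posL 4} ∧
    ¬ UnitDeriv (Eps4.eps ∪ paUnits Eps4.alpha) ∅ ∧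
    ¬ PCon Eps4.eps Set.univ := by
  have henc : IsEncodingOn Eps4.eps Eps4.Xset
      (fun a => ∃! v, v ∈ Eps4.Xset ∧ a v = true) := by
    intro a
    simp only [sat_eps_iff, Eps4.Xset, Set.mem_insert_iff, Set.mem_singleton_iff,
      ExistsUnique]
    revert a
    set_option synthInstance.maxSize 2000 in
    set_option synthInstance.maxHeartbeats 1000000 in
    set_option maxRecDepth 10000 in
    decide
  refine ⟨henc, entails_y, no_deriv_y, no_deriv_bot, ?_⟩
  intro hpc
  have hcons : ConsistentPA Eps4.alpha := by
    intro l hl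
    simp only [Eps4.alpha, Set.mem_insert_iff, Set.mem_singleton_iff] at hl ⊢
    rcases hl with rfl | rfl <;> decide
  have := hpc Eps4.alpha hcons (fun l _ => Set.mem_univ _) (posL 4) (Set.mem_univ _) entails_y
  rcases this with h | h
  · exact no_deriv_y h
  · exact no_deriv_bot h
end

section
/- For every n ≥ 4, the formula εₙ(x₁,…,xₙ) is a propagation complete encoding of EO(x₁,…,xₙ) with 4n−8 clauses and n−3 auxiliary variables; moreover, for each auxiliary variable y_i (1 ≤ i ≤ n−3), εₙ implies the equivalences ¬y_i ↔ (¬x₁ ∧ … ∧ ¬x_{i+1}) and y_i ↔ (¬x_{i+2} ∧ … ∧ ¬xₙ). -/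
set_option autoImplicit false

universe u v

/-- `ε₃(a,b,c)` on literals `a`, `b`, `c`:
the clauses `(¬a∨¬b)(¬a∨¬c)(¬b∨¬c)(a∨b∨c)`. -/
def eps3 {W : Type u} (a b c : Lit W) : CNF W :=
  {{a.negate, b.negate}, {a.negate, c.negate}, {b.negate, c.negate}, {a, b, c}}

namespace Eps

/-- Variables: `Sum.inl i` is the input variable `xᵢ` (`1 ≤ i ≤ n`) and
`Sum.inr j` is the auxiliary variable `yⱼ` (`1 ≤ j ≤ n-3`). -/
abbrev V : Type := ℕ ⊕ ℕ

def X (i : ℕ) : V := Sum.inl i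
def Y (j : ℕ) : V := Sum.inr j

/-- The first literal of the `j`-th block: `A 0 = x₁` and `A j = yⱼ` for `j ≥ 1`. -/
def A (j : ℕ) : Lit V := if j = 0 then posL (X 1) else posL (Y j)

/-- The formula `εₙ(x₁,…,xₙ) = ε₃(x₁,x₂,¬y₁) ∧ ε₃(y₁,x₃,¬y₂) ∧ … ∧
ε₃(y_{n−4},x_{n−2},¬y_{n−3}) ∧ ε₃(y_{n−3},x_{n−1},xₙ)` with auxiliary
variables `y₁,…,y_{n−3}`. -/
def epsCNF (n : ℕ) : CNF V :=
  (⋃ j ∈ Set.Icc 1 (n - 3), eps3 (A (j-1)) (posL (X (j+1))) (negL (Y j))) ∪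
  eps3 (A (n-3)) (posL (X (n-1))) (posL (X n))

/-- The input variables `x₁, …, xₙ`. -/
def Xset (n : ℕ) : Set V := {w | ∃ i, 1 ≤ i ∧ i ≤ n ∧ w = X i}

/-- The auxiliary variables `y₁, …, y_{n-3}`. -/
def Yset (n : ℕ) : Set V := {w | ∃ j, 1 ≤ j ∧ j ≤ n - 3 ∧ w = Y j}

/-- The exactly-one constraint `EO(x₁,…,xₙ)`. -/
def EOpred (n : ℕ) (a : V → Bool) : Prop := ∃! i, 1 ≤ i ∧ i ≤ n ∧ a (X i) = true

end Eps


namespace Stmt5Aux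
open Eps

/-! ### Literal basics -/

@[simp] lemma negate_posL {W : Type u} (v : W) : (posL v).negate = negL v := rfl
@[simp] lemma negate_negL {W : Type u} (v : W) : (negL v).negate = posL v := rfl
@[simp] lemma var_posL {W : Type u} (v : W) : (posL v).var = v := rfl
@[simp] lemma var_negL {W : Type u} (v : W) : (negL v).var = v := rfl
@[simp] lemma negate_negate {W : Type u} (l : Lit W) : l.negate.negate = l := by
  cases l with | mk v p => cases p <;> rfl

@[simp] lemma eval_posL {W : Type u} (a : W → Bool) (v : W) :
    Lit.eval a (posL v) ↔ a v = true := Iff.rfl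
@[simp] lemma eval_negL {W : Type u} (a : W → Bool) (v : W) :
    Lit.eval a (negL v) ↔ a v = false := Iff.rfl

lemma eval_negate {W : Type u} (a : W → Bool) (l : Lit W) :
    Lit.eval a l.negate ↔ ¬ Lit.eval a l := by
  cases l with | mk v p => cases p <;> simp [Lit.eval, Lit.negate]

lemma posL_injective {W : Type u} : Function.Injective (posL : W → Lit W) := by
  intro a b h; exact congrArg Lit.var h

lemma ne_of_var_ne {W : Type u} {l₁ l₂ : Lit W} (h : l₁.var ≠ l₂.var) : l₁ ≠ l₂ :=
  fun e => h (congrArg Lit.var e)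

/-! ### Unit derivation helpers -/

lemma ud_unit2 {W : Type u} {φ : CNF W} {p q : Lit W} (h : UnitDeriv φ {p, q})
    (hpq : p ≠ q) (hp : UnitDeriv φ {p.negate}) : UnitDeriv φ {q} := by
  have h2 := UnitDeriv.step (φ := φ) p (by simp) h hp
  have e : ({p, q} : Set (Lit W)) \ {p} = {q} := by
    ext l
    simp only [Set.mem_diff, Set.mem_insert_iff, Set.mem_singleton_iff]
    constructor
    · rintro ⟨h1 | h1, h2⟩ <;> tauto
    · rintro rfl; exact ⟨Or.inr rfl, fun hl => hpq hl.symm⟩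
  rwa [e] at h2

lemma ud_unit2' {W : Type u} {φ : CNF W} {p q : Lit W} (h : UnitDeriv φ {p, q})
    (hpq : p ≠ q) (hq : UnitDeriv φ {q.negate}) : UnitDeriv φ {p} := by
  have e : ({p, q} : Set (Lit W)) = {q, p} := Set.pair_comm p q
  exact ud_unit2 (e ▸ h) (Ne.symm hpq) hq

lemma ud_bot {W : Type u} {φ : CNF W} {p : Lit W} (h : UnitDeriv φ {p})
    (hp : UnitDeriv φ {p.negate}) : UnitDeriv φ ∅ := by
  have h2 := UnitDeriv.step (φ := φ) p (by simp) h hp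
  simpa using h2

lemma triple_rot {W : Type u} (p q r : Lit W) :
    ({p, q, r} : Set (Lit W)) = {q, r, p} := by
  ext l; simp only [Set.mem_insert_iff, Set.mem_singleton_iff]; tauto

lemma triple_swap {W : Type u} (p q r : Lit W) :
    ({p, q, r} : Set (Lit W)) = {p, r, q} := by
  ext l; simp only [Set.mem_insert_iff, Set.mem_singleton_iff]; tauto

/-- From `{p,q,r}` and units `¬p`, `¬q`, derive `{r}`. -/
lemma ud_unit3 {W : Type u} {φ : CNF W} {p q r : Lit W} (h : UnitDeriv φ {p, q, r})
    (hpq : p ≠ q) (hpr : p ≠ r) (hqr : q ≠ r)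
    (hp : UnitDeriv φ {p.negate}) (hq : UnitDeriv φ {q.negate}) : UnitDeriv φ {r} := by
  have h2 := UnitDeriv.step (φ := φ) p (by simp) h hp
  have e : ({p, q, r} : Set (Lit W)) \ {p} = {q, r} := by
    ext l
    simp only [Set.mem_diff, Set.mem_insert_iff, Set.mem_singleton_iff]
    constructor
    · rintro ⟨h1 | h1 | h1, h2⟩ <;> tauto
    · rintro (rfl | rfl)
      · exact ⟨Or.inr (Or.inl rfl), fun hl => hpq hl.symm⟩
      · exact ⟨Or.inr (Or.inr rfl), fun hl => hpr hl.symm⟩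
  rw [e] at h2
  exact ud_unit2 h2 hqr hq

/-- From `{p,q,r}` and units `¬p`, `¬r`, derive `{q}`. -/
lemma ud_unit3' {W : Type u} {φ : CNF W} {p q r : Lit W} (h : UnitDeriv φ {p, q, r})
    (hpq : p ≠ q) (hpr : p ≠ r) (hqr : q ≠ r)
    (hp : UnitDeriv φ {p.negate}) (hr : UnitDeriv φ {r.negate}) : UnitDeriv φ {q} :=
  ud_unit3 (triple_swap p q r ▸ h) hpr hpq (Ne.symm hqr) hp hr

/-- From `{p,q,r}` and units `¬q`, `¬r`, derive `{p}`. -/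
lemma ud_unit3'' {W : Type u} {φ : CNF W} {p q r : Lit W} (h : UnitDeriv φ {p, q, r})
    (hpq : p ≠ q) (hpr : p ≠ r) (hqr : q ≠ r)
    (hq : UnitDeriv φ {q.negate}) (hr : UnitDeriv φ {r.negate}) : UnitDeriv φ {p} :=
  ud_unit3 (triple_rot p q r ▸ h) hqr (Ne.symm hpq) (Ne.symm hpr) hq hr

/-! ### Uniform block representation of `epsCNF` -/

/-- The third literal of block `j` (`1 ≤ j ≤ n-2`). -/
def RL (n j : ℕ) : Lit V := if j = n - 2 then posL (X n) else negL (Y j)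

lemma RL_of_ne {n j : ℕ} (h : j ≠ n - 2) : RL n j = negL (Y j) := if_neg h
lemma RL_of_eq {n j : ℕ} (h : j = n - 2) : RL n j = posL (X n) := if_pos h
lemma A_zero : A 0 = posL (X 1) := if_pos rfl
lemma A_of_ne {j : ℕ} (h : j ≠ 0) : A j = posL (Y j) := if_neg h

lemma epsCNF_eq (n : ℕ) (hn : 4 ≤ n) :
    epsCNF n = ⋃ j ∈ Set.Icc 1 (n-2), eps3 (A (j-1)) (posL (X (j+1))) (RL n j) := by
  ext C
  simp only [epsCNF, Set.mem_union, Set.mem_iUnion, Set.mem_Icc, exists_prop]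
  constructor
  · rintro (⟨j, ⟨h1, h2⟩, hC⟩ | hC)
    · exact ⟨j, ⟨h1, by omega⟩, by rwa [RL_of_ne (by omega)]⟩
    · refine ⟨n-2, ⟨by omega, le_refl _⟩, ?_⟩
      rw [RL_of_eq rfl, show n-2-1 = n-3 by omega, show n-2+1 = n-1 by omega]
      exact hC
  · rintro ⟨j, ⟨h1, h2⟩, hC⟩
    by_cases hj : j = n - 2
    · right
      subst hj
      rwa [RL_of_eq rfl, show n-2-1 = n-3 by omega, show n-2+1 = n-1 by omega] at hC
    · left
      exact ⟨j, ⟨h1, by omega⟩, by rwa [RL_of_ne hj] at hC⟩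

section Blocks

variable {n : ℕ} {φ : CNF V} (hn : 4 ≤ n) (hφ : epsCNF n ⊆ φ)
include hn hφ

lemma mem_block {j : ℕ} (hj1 : 1 ≤ j) (hj2 : j ≤ n - 2) {C : Clause V}
    (hC : C ∈ eps3 (A (j-1)) (posL (X (j+1))) (RL n j)) : C ∈ φ := by
  apply hφ
  rw [epsCNF_eq n hn]
  exact Set.mem_biUnion (Set.mem_Icc.mpr ⟨hj1, hj2⟩) hC

lemma ud_c1 {j : ℕ} (hj1 : 1 ≤ j) (hj2 : j ≤ n - 2) :
    UnitDeriv φ {(A (j-1)).negate, negL (X (j+1))} :=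
  UnitDeriv.base (mem_block hn hφ hj1 hj2 (by simp [eps3]))

lemma ud_c2 {j : ℕ} (hj1 : 1 ≤ j) (hj2 : j ≤ n - 2) :
    UnitDeriv φ {(A (j-1)).negate, (RL n j).negate} :=
  UnitDeriv.base (mem_block hn hφ hj1 hj2 (by simp [eps3]))

lemma ud_c3 {j : ℕ} (hj1 : 1 ≤ j) (hj2 : j ≤ n - 2) :
    UnitDeriv φ {negL (X (j+1)), (RL n j).negate} :=
  UnitDeriv.base (mem_block hn hφ hj1 hj2 (by simp [eps3]))

lemma ud_c4 {j : ℕ} (hj1 : 1 ≤ j) (hj2 : j ≤ n - 2) :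
    UnitDeriv φ {A (j-1), posL (X (j+1)), RL n j} :=
  UnitDeriv.base (mem_block hn hφ hj1 hj2 (by simp [eps3]))

end Blocks


/-! ### distinctness of literals -/

lemma posL_ne_negL' {W : Type u} (v w : W) : posL v ≠ negL w :=
  fun e => by simpa [posL, negL] using congrArg Lit.pos e
lemma negL_ne_posL' {W : Type u} (v w : W) : negL v ≠ posL w :=
  fun e => by simpa [posL, negL] using congrArg Lit.pos e
lemma posL_ne_posL {W : Type u} {v w : W} (h : v ≠ w) : posL v ≠ posL w :=
  fun e => h (congrArg Lit.var e)
lemma negL_ne_negL {W : Type u} {v w : W} (h : v ≠ w) : negL v ≠ negL w :=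
  fun e => h (congrArg Lit.var e)
lemma negate_ne {W : Type u} {l₁ l₂ : Lit W} (h : l₁ ≠ l₂) : l₁.negate ≠ l₂.negate :=
  fun e => h (by have := congrArg Lit.negate e; simpa using this)
lemma X_ne_Y (i j : ℕ) : X i ≠ Y j := by simp [X, Y]
lemma Y_ne_X (i j : ℕ) : Y i ≠ X j := by simp [X, Y]
lemma X_ne_X {i j : ℕ} (h : i ≠ j) : X i ≠ X j := by simp [X]; exact h
lemma Y_ne_Y {i j : ℕ} (h : i ≠ j) : Y i ≠ Y j := by simp [Y]; exact h

lemma d_AX {n j : ℕ} (hn : 4 ≤ n) (hj : 1 ≤ j) (hj2 : j ≤ n - 2) :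
    A (j-1) ≠ posL (X (j+1)) := by
  by_cases h0 : j - 1 = 0
  · rw [A, if_pos h0]; exact posL_ne_posL (X_ne_X (by omega))
  · rw [A, if_neg h0]; exact posL_ne_posL (Y_ne_X _ _)

lemma d_AR {n j : ℕ} (hn : 4 ≤ n) (hj : 1 ≤ j) (hj2 : j ≤ n - 2) :
    A (j-1) ≠ RL n j := by
  rw [RL]; split
  · by_cases h0 : j - 1 = 0
    · rw [A, if_pos h0]; exact posL_ne_posL (X_ne_X (by omega))
    · rw [A, if_neg h0]; exact posL_ne_posL (Y_ne_X _ _)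
  · by_cases h0 : j - 1 = 0
    · rw [A, if_pos h0]; exact posL_ne_negL' _ _
    · rw [A, if_neg h0]; exact posL_ne_negL' _ _

lemma d_XR {n j : ℕ} (hn : 4 ≤ n) (hj : 1 ≤ j) (hj2 : j ≤ n - 2) :
    posL (X (j+1)) ≠ RL n j := by
  rw [RL]; split
  · exact posL_ne_posL (X_ne_X (by omega))
  · exact posL_ne_negL' _ _

section Blocks2

variable {n : ℕ} {φ : CNF V} (hn : 4 ≤ n) (hφ : epsCNF n ⊆ φ)
include hn hφ

/-! ### one-step unit propagations, uniform in the block index `j ∈ [1, n-2]` -/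

lemma uA_X {j : ℕ} (hj1 : 1 ≤ j) (hj2 : j ≤ n - 2)
    (h : UnitDeriv φ {A (j-1)}) : UnitDeriv φ {negL (X (j+1))} := by
  refine ud_unit2 (ud_c1 hn hφ hj1 hj2) (negate_ne (d_AX hn hj1 hj2)) ?_
  simpa using h

lemma uA_R {j : ℕ} (hj1 : 1 ≤ j) (hj2 : j ≤ n - 2)
    (h : UnitDeriv φ {A (j-1)}) : UnitDeriv φ {(RL n j).negate} := by
  refine ud_unit2 (ud_c2 hn hφ hj1 hj2) (negate_ne (d_AR hn hj1 hj2)) ?_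
  simpa using h

lemma uX_A {j : ℕ} (hj1 : 1 ≤ j) (hj2 : j ≤ n - 2)
    (h : UnitDeriv φ {posL (X (j+1))}) : UnitDeriv φ {(A (j-1)).negate} := by
  refine ud_unit2' (ud_c1 hn hφ hj1 hj2) (negate_ne (d_AX hn hj1 hj2)) ?_
  simpa using h

lemma uX_R {j : ℕ} (hj1 : 1 ≤ j) (hj2 : j ≤ n - 2)
    (h : UnitDeriv φ {posL (X (j+1))}) : UnitDeriv φ {(RL n j).negate} := by
  refine ud_unit2 (ud_c3 hn hφ hj1 hj2) (negate_ne (d_XR hn hj1 hj2)) ?_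
  simpa using h

lemma uR_A {j : ℕ} (hj1 : 1 ≤ j) (hj2 : j ≤ n - 2)
    (h : UnitDeriv φ {RL n j}) : UnitDeriv φ {(A (j-1)).negate} := by
  refine ud_unit2' (ud_c2 hn hφ hj1 hj2) (negate_ne (d_AR hn hj1 hj2)) ?_
  simpa using h

lemma uR_X {j : ℕ} (hj1 : 1 ≤ j) (hj2 : j ≤ n - 2)
    (h : UnitDeriv φ {RL n j}) : UnitDeriv φ {negL (X (j+1))} := by
  refine ud_unit2' (ud_c3 hn hφ hj1 hj2) (negate_ne (d_XR hn hj1 hj2)) ?_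
  simpa using h

lemma u3_R {j : ℕ} (hj1 : 1 ≤ j) (hj2 : j ≤ n - 2)
    (hA : UnitDeriv φ {(A (j-1)).negate}) (hX : UnitDeriv φ {negL (X (j+1))}) :
    UnitDeriv φ {RL n j} := by
  refine ud_unit3 (ud_c4 hn hφ hj1 hj2) (d_AX hn hj1 hj2) (d_AR hn hj1 hj2)
    (d_XR hn hj1 hj2) hA ?_
  simpa using hX

lemma u3_X {j : ℕ} (hj1 : 1 ≤ j) (hj2 : j ≤ n - 2)
    (hA : UnitDeriv φ {(A (j-1)).negate}) (hR : UnitDeriv φ {(RL n j).negate}) :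
    UnitDeriv φ {posL (X (j+1))} :=
  ud_unit3' (ud_c4 hn hφ hj1 hj2) (d_AX hn hj1 hj2) (d_AR hn hj1 hj2)
    (d_XR hn hj1 hj2) hA hR

lemma u3_A {j : ℕ} (hj1 : 1 ≤ j) (hj2 : j ≤ n - 2)
    (hX : UnitDeriv φ {negL (X (j+1))}) (hR : UnitDeriv φ {(RL n j).negate}) :
    UnitDeriv φ {A (j-1)} := by
  refine ud_unit3'' (ud_c4 hn hφ hj1 hj2) (d_AX hn hj1 hj2) (d_AR hn hj1 hj2)
    (d_XR hn hj1 hj2) ?_ hR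
  simpa using hX

end Blocks2


/-- Downward induction from `j` to all `k ∈ [1, j]`. -/
lemma downInd {j : ℕ} {Q : ℕ → Prop} (base : Q j)
    (step : ∀ k, 1 ≤ k → k < j → Q (k+1) → Q k) : ∀ k, 1 ≤ k → k ≤ j → Q k := by
  have key : ∀ d k, 1 ≤ k → k + d = j → Q k := by
    intro d
    induction d with
    | zero => intro k _ he; exact (by omega : k = j) ▸ base
    | succ d ih =>
        intro k hk he
        exact step k hk (by omega) (ih (k+1) (by omega) (by omega))
  intro k hk hkj
  exact key (j - k) k hk (by omega)

section Claims

variable {n : ℕ} {φ : CNF V} (hn : 4 ≤ n) (hφ : epsCNF n ⊆ φ)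
include hn hφ

lemma claimC_Y {j : ℕ} (hj1 : 1 ≤ j) (hj2 : j ≤ n - 3)
    (h : UnitDeriv φ {posL (Y j)}) :
    ∀ k, j ≤ k → k ≤ n - 3 → UnitDeriv φ {posL (Y k)} := by
  intro k hk
  induction k, hk using Nat.le_induction with
  | base => intro _; exact h
  | succ k hk ih =>
      intro hk2
      have hy := ih (by omega)
      -- block k+1, A k = posL (Y k), RL n (k+1) = negL (Y (k+1))
      have := uA_R hn hφ (j := k+1) (by omega) (by omega)
        (by rw [show k+1-1 = k by omega, A_of_ne (by omega)]; exact hy)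
      rwa [RL_of_ne (by omega), negate_negL] at this

lemma claimC_X {j : ℕ} (hj1 : 1 ≤ j) (hj2 : j ≤ n - 3)
    (h : UnitDeriv φ {posL (Y j)}) :
    ∀ m, j + 2 ≤ m → m ≤ n → UnitDeriv φ {negL (X m)} := by
  intro m hm1 hm2
  by_cases hm : m ≤ n - 2
  · have hy := claimC_Y hn hφ hj1 hj2 h (m-2) (by omega) (by omega)
    have := uA_X hn hφ (j := m-1) (by omega) (by omega)
      (by rw [show m-1-1 = m-2 by omega, A_of_ne (by omega)]; exact hy)
    rwa [show m-1+1 = m by omega] at this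
  · have hy := claimC_Y hn hφ hj1 hj2 h (n-3) (by omega) (by omega)
    have hA : UnitDeriv φ {A (n-2-1)} := by
      rw [show n-2-1 = n-3 by omega, A_of_ne (by omega)]; exact hy
    by_cases hm' : m = n - 1
    · have := uA_X hn hφ (j := n-2) (by omega) (le_refl _) hA
      rwa [show n-2+1 = m by omega] at this
    · have := uA_R hn hφ (j := n-2) (by omega) (le_refl _) hA
      rwa [RL_of_eq rfl, negate_posL, show n = m by omega] at this

lemma claimD_Y {j : ℕ} (hj1 : 1 ≤ j) (hj2 : j ≤ n - 3)
    (h : UnitDeriv φ {negL (Y j)}) :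
    ∀ k, 1 ≤ k → k ≤ j → UnitDeriv φ {negL (Y k)} := by
  refine downInd h ?_
  intro k hk1 hk2 hQ
  -- block k+1 : RL n (k+1) = negL (Y (k+1)), A k = posL (Y k)
  have := uR_A hn hφ (j := k+1) (by omega) (by omega)
    (by rw [RL_of_ne (by omega)]; exact hQ)
  rwa [show k+1-1 = k by omega, A_of_ne (by omega), negate_posL] at this

lemma claimD_X {j : ℕ} (hj1 : 1 ≤ j) (hj2 : j ≤ n - 3)
    (h : UnitDeriv φ {negL (Y j)}) :
    ∀ m, 1 ≤ m → m ≤ j + 1 → UnitDeriv φ {negL (X m)} := by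
  intro m hm1 hm2
  by_cases hm : m = 1
  · have hy := claimD_Y hn hφ hj1 hj2 h 1 le_rfl hj1
    have := uR_A hn hφ (j := 1) le_rfl (by omega)
      (by rw [RL_of_ne (by omega)]; exact hy)
    rw [hm]; rwa [show (1:ℕ)-1 = 0 by omega, A_zero, negate_posL] at this
  · have hy := claimD_Y hn hφ hj1 hj2 h (m-1) (by omega) (by omega)
    have := uR_X hn hφ (j := m-1) (by omega) (by omega)
      (by rw [RL_of_ne (by omega)]; exact hy)
    rwa [show m-1+1 = m by omega] at this

lemma claimA {j : ℕ} (hj1 : 1 ≤ j) (hj2 : j ≤ n - 3)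
    (h : ∀ m, 1 ≤ m → m ≤ j + 1 → UnitDeriv φ {negL (X m)}) :
    UnitDeriv φ {negL (Y j)} := by
  induction j, hj1 using Nat.le_induction with
  | base =>
      have := u3_R hn hφ (j := 1) le_rfl (by omega)
        (by rw [show (1:ℕ)-1 = 0 by omega, A_zero, negate_posL]; exact h 1 le_rfl (by omega))
        (h 2 (by omega) (by omega))
      rwa [RL_of_ne (by omega)] at this
  | succ j hj ih =>
      have hyj : UnitDeriv φ {negL (Y j)} :=
        ih (by omega) (fun m h1 h2 => h m h1 (by omega))
      have := u3_R hn hφ (j := j+1) (by omega) (by omega)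
        (by rw [show j+1-1 = j by omega, A_of_ne (by omega), negate_posL]; exact hyj)
        (h (j+2) (by omega) (by omega))
      rwa [RL_of_ne (by omega)] at this

lemma claimB {j : ℕ} (hj1 : 1 ≤ j) (hj2 : j ≤ n - 3)
    (h : ∀ m, j + 2 ≤ m → m ≤ n → UnitDeriv φ {negL (X m)}) :
    UnitDeriv φ {posL (Y j)} := by
  have main : ∀ k, 1 ≤ k → k ≤ n - 3 →
      ((∀ m, k + 2 ≤ m → m ≤ n → UnitDeriv φ {negL (X m)}) → UnitDeriv φ {posL (Y k)}) := by
    refine downInd ?_ ?_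
    · intro hh
      have := u3_A hn hφ (j := n-2) (by omega) le_rfl
        (by rw [show n-2+1 = n-1 by omega]; exact hh (n-1) (by omega) (by omega))
        (by rw [RL_of_eq rfl, negate_posL]; exact hh n (by omega) le_rfl)
      rwa [show n-2-1 = n-3 by omega, A_of_ne (by omega)] at this
    · intro k hk1 hk2 hQ hh
      have hy : UnitDeriv φ {posL (Y (k+1))} :=
        hQ (fun m h1 h2 => hh m (by omega) h2)
      have := u3_A hn hφ (j := k+1) (by omega) (by omega)
        (hh (k+2) le_rfl (by omega))
        (by rw [RL_of_ne (by omega), negate_negL]; exact hy)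
      rwa [show k+1-1 = k by omega, A_of_ne (by omega)] at this
  exact main j hj1 hj2 h

lemma claimF {i : ℕ} (hi1 : 1 ≤ i) (hi2 : i ≤ n)
    (h : ∀ m, 1 ≤ m → m ≤ n → m ≠ i → UnitDeriv φ {negL (X m)}) :
    UnitDeriv φ {posL (X i)} := by
  by_cases hc1 : i = 1
  · subst hc1
    have hB := claimB hn hφ (j := 1) le_rfl (by omega)
      (fun m h1 h2 => h m (by omega) h2 (by omega))
    have := u3_A hn hφ (j := 1) le_rfl (by omega)
      (h 2 (by omega) (by omega) (by omega))
      (by rw [RL_of_ne (by omega), negate_negL]; exact hB)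
    rwa [show (1:ℕ)-1 = 0 by omega, A_zero] at this
  by_cases hc2 : i ≤ n - 2
  · -- 2 ≤ i ≤ n-2 : block i-1
    have hA : UnitDeriv φ {(A (i-1-1)).negate} := by
      by_cases hc3 : i = 2
      · rw [show i-1-1 = 0 by omega, A_zero, negate_posL]
        exact h 1 le_rfl (by omega) (by omega)
      · rw [show i-1-1 = i-2 by omega, A_of_ne (by omega), negate_posL]
        exact claimA hn hφ (by omega) (by omega)
          (fun m h1 h2 => h m h1 (by omega) (by omega))
    have hB := claimB hn hφ (j := i-1) (by omega) (by omega)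
      (fun m h1 h2 => h m (by omega) h2 (by omega))
    have := u3_X hn hφ (j := i-1) (by omega) (by omega) hA
      (by rw [RL_of_ne (by omega), negate_negL]; exact hB)
    rwa [show i-1+1 = i by omega] at this
  · -- i = n-1 or i = n : block n-2
    have hA : UnitDeriv φ {(A (n-2-1)).negate} := by
      rw [show n-2-1 = n-3 by omega, A_of_ne (by omega), negate_posL]
      exact claimA hn hφ (by omega) le_rfl
        (fun m h1 h2 => h m h1 (by omega) (by omega))
    by_cases hc3 : i = n - 1
    · have := u3_X hn hφ (j := n-2) (by omega) le_rfl hA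
        (by rw [RL_of_eq rfl, negate_posL]; exact h n (by omega) le_rfl (by omega))
      rwa [show n-2+1 = i by omega] at this
    · have := u3_R hn hφ (j := n-2) (by omega) le_rfl hA
        (by rw [show n-2+1 = n-1 by omega]; exact h (n-1) (by omega) (by omega) (by omega))
      rwa [RL_of_eq rfl, show n = i by omega] at this

lemma claimE {i : ℕ} (hi1 : 1 ≤ i) (hi2 : i ≤ n)
    (h : UnitDeriv φ {posL (X i)}) :
    ∀ m, 1 ≤ m → m ≤ n → m ≠ i → UnitDeriv φ {negL (X m)} := by
  intro m hm1 hm2 hmi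
  by_cases hc1 : i = 1
  · subst hc1
    have hA0 : UnitDeriv φ {A (1-1)} := by
      rw [show (1:ℕ)-1 = 0 by omega, A_zero]; exact h
    by_cases hm2' : m = 2
    · have := uA_X hn hφ (j := 1) le_rfl (by omega) hA0
      rwa [show (1:ℕ)+1 = m by omega] at this
    · have hy1 : UnitDeriv φ {posL (Y 1)} := by
        have := uA_R hn hφ (j := 1) le_rfl (by omega) hA0
        rwa [RL_of_ne (by omega), negate_negL] at this
      exact claimC_X hn hφ le_rfl (by omega) hy1 m (by omega) hm2
  by_cases hc2 : i ≤ n - 2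
  · -- 2 ≤ i ≤ n-2 : block i-1
    have hXi : UnitDeriv φ {posL (X (i-1+1))} := by
      rw [show i-1+1 = i by omega]; exact h
    by_cases hcm : m ≤ i - 1
    · have hA := uX_A hn hφ (j := i-1) (by omega) (by omega) hXi
      by_cases hc3 : i = 2
      · rw [show i-1-1 = 0 by omega, A_zero, negate_posL] at hA
        rwa [show m = 1 by omega]
      · rw [show i-1-1 = i-2 by omega, A_of_ne (by omega), negate_posL] at hA
        exact claimD_X hn hφ (by omega) (by omega) hA m hm1 (by omega)
    · have hR := uX_R hn hφ (j := i-1) (by omega) (by omega) hXi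
      rw [RL_of_ne (by omega), negate_negL] at hR
      exact claimC_X hn hφ (by omega) (by omega) hR m (by omega) hm2
  · -- i = n-1 or n : block n-2
    have hA : UnitDeriv φ {(A (n-2-1)).negate} := by
      by_cases hc3 : i = n - 1
      · exact uX_A hn hφ (j := n-2) (by omega) le_rfl
          (by rw [show n-2+1 = i by omega]; exact h)
      · exact uR_A hn hφ (j := n-2) (by omega) le_rfl
          (by rw [RL_of_eq rfl, show n = i by omega]; exact h)
    rw [show n-2-1 = n-3 by omega, A_of_ne (by omega), negate_posL] at hA
    by_cases hcm : m ≤ n - 2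
    · exact claimD_X hn hφ (by omega) le_rfl hA m hm1 (by omega)
    · -- m is the other of {n-1, n}
      by_cases hc3 : i = n - 1
      · have := uX_R hn hφ (j := n-2) (by omega) le_rfl
          (by rw [show n-2+1 = i by omega]; exact h)
        rw [RL_of_eq rfl, negate_posL] at this
        rwa [show n = m by omega] at this
      · have := uR_X hn hφ (j := n-2) (by omega) le_rfl
          (by rw [RL_of_eq rfl, show n = i by omega]; exact h)
        rwa [show n-2+1 = m by omega] at this

end Claims


/-! ### Semantics -/

/-- Exactly one of three propositions. -/
def XOne (p q r : Prop) : Prop := (p ∧ ¬q ∧ ¬r) ∨ (¬p ∧ q ∧ ¬r) ∨ (¬p ∧ ¬q ∧ r)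

lemma sat_eps3_iff {W : Type u} (a : W → Bool) (p q r : Lit W) :
    CNF.Sat a (eps3 p q r) ↔ XOne (Lit.eval a p) (Lit.eval a q) (Lit.eval a r) := by
  simp only [eps3, CNF.Sat, Set.mem_insert_iff, Set.mem_singleton_iff, forall_eq_or_imp,
    forall_eq, Clause.Sat, exists_eq_or_imp, exists_eq_left, eval_negate, XOne]
  tauto

lemma sat_epsCNF_iff {n : ℕ} (hn : 4 ≤ n) (a : V → Bool) :
    CNF.Sat a (epsCNF n) ↔ ∀ j, 1 ≤ j → j ≤ n - 2 →
      XOne (Lit.eval a (A (j-1))) (Lit.eval a (posL (X (j+1)))) (Lit.eval a (RL n j)) := by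
  rw [epsCNF_eq n hn]
  constructor
  · intro hs j h1 h2
    rw [← sat_eps3_iff]
    intro C hC
    exact hs C (Set.mem_biUnion (Set.mem_Icc.mpr ⟨h1, h2⟩) hC)
  · intro hs C hC
    rw [Set.mem_iUnion] at hC
    obtain ⟨j, hC⟩ := hC
    simp only [Set.mem_iUnion, Set.mem_Icc, exists_prop] at hC
    exact (sat_eps3_iff a _ _ _).mpr (hs j hC.1.1 hC.1.2) C hC.2

section Chain

variable {n : ℕ} {a : V → Bool} (hn : 4 ≤ n) (hs : CNF.Sat a (epsCNF n))
include hn hs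

lemma block_xone {j : ℕ} (h1 : 1 ≤ j) (h2 : j ≤ n - 2) :
    XOne (Lit.eval a (A (j-1))) (Lit.eval a (posL (X (j+1)))) (Lit.eval a (RL n j)) :=
  (sat_epsCNF_iff hn a).mp hs j h1 h2

lemma chainF : ∀ j, j ≤ n - 3 →
    ((Lit.eval a (A j) → ∃! k, 1 ≤ k ∧ k ≤ j + 1 ∧ a (X k) = true) ∧
     (¬ Lit.eval a (A j) → ∀ k, 1 ≤ k → k ≤ j + 1 → a (X k) = false)) := by
  intro j
  induction j with
  | zero =>
      intro _
      rw [A_zero]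
      constructor
      · intro hx
        exact ⟨1, ⟨le_rfl, le_rfl, hx⟩, fun k hk => by omega⟩
      · intro hx k h1 h2
        have : k = 1 := by omega
        subst this
        simpa using hx
  | succ j ih =>
      intro hj
      have hX1 := block_xone hn hs (j := j+1) (by omega) (by omega)
      rw [show j+1-1 = j by omega, RL_of_ne (by omega)] at hX1
      rw [A_of_ne (by omega)]
      have ihp := ih (by omega)
      constructor
      · intro hy
        simp only [eval_posL] at hy
        simp only [eval_negL, eval_posL, hy, XOne] at hX1
        rcases hX1 with ⟨hp, hq, -⟩ | ⟨hp, hq, -⟩ | ⟨-, -, hr⟩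
        · obtain ⟨k₀, ⟨hk1, hk2, hk3⟩, hu⟩ := ihp.1 hp
          refine ⟨k₀, ⟨hk1, by omega, hk3⟩, ?_⟩
          intro k ⟨h1', h2', h3'⟩
          by_cases hkk : k = j + 2
          · exact absurd h3' (by rw [hkk]; exact hq)
          · exact hu k ⟨h1', by omega, h3'⟩
        · refine ⟨j+2, ⟨by omega, le_rfl, hq⟩, ?_⟩
          intro k ⟨h1', h2', h3'⟩
          by_cases hkk : k = j + 2
          · exact hkk
          · exact absurd h3' (by simp [ihp.2 hp k h1' (by omega)])
        · simp at hr
      · intro hy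
        simp only [eval_posL] at hy
        have hy' : a (Y (j+1)) = false := by
          revert hy; cases a (Y (j+1)) <;> simp
        simp only [eval_negL, eval_posL, hy', XOne] at hX1
        rcases hX1 with ⟨-, -, hr⟩ | ⟨-, -, hr⟩ | ⟨hp, hq, -⟩
        · simp at hr
        · simp at hr
        · intro k h1 h2
          by_cases hkk : k = j + 2
          · subst hkk; revert hq; cases a (X (j+2)) <;> simp
          · exact ihp.2 hp k h1 (by omega)

lemma chainB : ∀ j, 1 ≤ j → j ≤ n - 3 →
    ((a (Y j) = true → ∀ k, j + 2 ≤ k → k ≤ n → a (X k) = false) ∧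
     (a (Y j) = false → ∃! k, j + 2 ≤ k ∧ k ≤ n ∧ a (X k) = true)) := by
  refine downInd ?_ ?_
  · -- base j = n - 3, last block
    have hX1 := block_xone hn hs (j := n-2) (by omega) le_rfl
    rw [show n-2-1 = n-3 by omega, RL_of_eq rfl, A_of_ne (by omega),
      show n-2+1 = n-1 by omega] at hX1
    constructor
    · intro hy
      simp only [eval_posL, hy, XOne] at hX1
      rcases hX1 with ⟨-, hq, hr⟩ | ⟨hp, -, -⟩ | ⟨hp, -, -⟩
      · intro k h1 h2
        have hk : k = n - 1 ∨ k = n := by omega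
        rcases hk with hk | hk
        · rw [hk]; revert hq; cases a (X (n-1)) <;> simp
        · rw [hk]; revert hr; cases a (X n) <;> simp
      · simp at hp
      · simp at hp
    · intro hy
      simp only [eval_posL, hy, XOne] at hX1
      rcases hX1 with ⟨hp, -, -⟩ | ⟨-, hq, hr⟩ | ⟨-, hq, hr⟩
      · simp at hp
      · refine ⟨n-1, ⟨by omega, by omega, hq⟩, ?_⟩
        intro k ⟨h1', h2', h3'⟩
        have hk : k = n - 1 ∨ k = n := by omega
        rcases hk with hk | hk
        · exact hk
        · rw [hk] at h3'; exact absurd h3' (by revert hr; cases a (X n) <;> simp)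
      · refine ⟨n, ⟨by omega, le_rfl, hr⟩, ?_⟩
        intro k ⟨h1', h2', h3'⟩
        have hk : k = n - 1 ∨ k = n := by omega
        rcases hk with hk | hk
        · rw [hk] at h3'; exact absurd h3' (by revert hq; cases a (X (n-1)) <;> simp)
        · exact hk
  · -- step from j+1 down to j
    intro j hj1 hj2 ih
    have hX1 := block_xone hn hs (j := j+1) (by omega) (by omega)
    rw [show j+1-1 = j by omega, RL_of_ne (by omega), A_of_ne (by omega)] at hX1
    constructor
    · intro hy
      simp only [eval_posL, eval_negL, hy, XOne] at hX1
      rcases hX1 with ⟨-, hq, hr⟩ | ⟨hp, -, -⟩ | ⟨hp, -, -⟩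
      · have hy1 : a (Y (j+1)) = true := by
          revert hr; cases a (Y (j+1)) <;> simp
        intro k h1 h2
        by_cases hkk : k = j + 2
        · subst hkk; revert hq; cases a (X (j+2)) <;> simp
        · exact (ih.1 hy1) k (by omega) h2
      · simp at hp
      · simp at hp
    · intro hy
      simp only [eval_posL, eval_negL, hy, XOne] at hX1
      rcases hX1 with ⟨hp, -, -⟩ | ⟨-, hq, hr⟩ | ⟨-, hq, hr⟩
      · simp at hp
      · -- x_{j+2} is the one
        have hy1 : a (Y (j+1)) = true := by
          revert hr; cases a (Y (j+1)) <;> simp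
        refine ⟨j+2, ⟨le_rfl, by omega, hq⟩, ?_⟩
        intro k ⟨h1', h2', h3'⟩
        by_cases hkk : k = j + 2
        · exact hkk
        · exact absurd h3' (by simp [(ih.1 hy1) k (by omega) h2'])
      · -- y_{j+1} false : the one is further right
        have hy1 : a (Y (j+1)) = false := by
          revert hr; cases a (Y (j+1)) <;> simp
        obtain ⟨k₀, ⟨hk1, hk2, hk3⟩, hu⟩ := ih.2 hy1
        refine ⟨k₀, ⟨by omega, hk2, hk3⟩, ?_⟩
        intro k ⟨h1', h2', h3'⟩
        by_cases hkk : k = j + 2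
        · exact absurd h3' (by revert hq; subst hkk; cases a (X (j+2)) <;> simp)
        · exact hu k ⟨by omega, h2', h3'⟩

lemma EO_of_sat : ∃! i, 1 ≤ i ∧ i ≤ n ∧ a (X i) = true := by
  have hF := chainF hn hs (n-3) le_rfl
  have hB := chainB hn hs (n-3) (by omega) le_rfl
  rw [A_of_ne (by omega)] at hF
  cases hy : a (Y (n-3)) with
  | true =>
      obtain ⟨k₀, ⟨hk1, hk2, hk3⟩, hu⟩ := hF.1 (by simpa using hy)
      refine ⟨k₀, ⟨hk1, by omega, hk3⟩, ?_⟩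
      intro k ⟨h1', h2', h3'⟩
      by_cases hkk : k ≤ n - 2
      · exact hu k ⟨h1', by omega, h3'⟩
      · exact absurd h3' (by simp [hB.1 hy k (by omega) h2'])
  | false =>
      obtain ⟨k₀, ⟨hk1, hk2, hk3⟩, hu⟩ := hB.2 hy
      refine ⟨k₀, ⟨by omega, hk2, hk3⟩, ?_⟩
      intro k ⟨h1', h2', h3'⟩
      by_cases hkk : k ≤ n - 2
      · exact absurd h3' (by simp [hF.2 (by simp [hy]) k h1' (by omega)])
      · exact hu k ⟨by omega, h2', h3'⟩

lemma sat_Y_iff {i : ℕ} (hi1 : 1 ≤ i) (hi2 : i ≤ n) (hXi : a (X i) = true) :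
    ∀ j, 1 ≤ j → j ≤ n - 3 → (a (Y j) = true ↔ i ≤ j + 1) := by
  intro j h1 h2
  constructor
  · intro hy
    by_contra hc
    have := (chainB hn hs j h1 h2).1 hy i (by omega) hi2
    simp [this] at hXi
  · intro hij
    cases hy : a (Y j) with
    | true => rfl
    | false =>
        have hF := (chainF hn hs j (by omega)).2
        rw [A_of_ne (by omega)] at hF
        have := hF (by simp [hy]) i hi1 (by omega)
        simp [this] at hXi

end Chain


/-! ### Selector assignments -/

lemma sat_of_selector {n : ℕ} (hn : 4 ≤ n) {a : V → Bool} {i : ℕ} (hi1 : 1 ≤ i) (hi2 : i ≤ n)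
    (hX : ∀ k, 1 ≤ k → k ≤ n → (a (X k) = true ↔ k = i))
    (hY : ∀ j, 1 ≤ j → j ≤ n - 3 → (a (Y j) = true ↔ i ≤ j + 1)) :
    CNF.Sat a (epsCNF n) := by
  rw [sat_epsCNF_iff hn]
  intro j h1 h2
  have hp : Lit.eval a (A (j-1)) ↔ i ≤ j := by
    by_cases h0 : j = 1
    · subst h0
      rw [show (1:ℕ)-1 = 0 from rfl, A_zero, eval_posL, hX 1 le_rfl (by omega)]
      omega
    · rw [A_of_ne (by omega), eval_posL, hY (j-1) (by omega) (by omega)]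
      omega
  have hq : Lit.eval a (posL (X (j+1))) ↔ j + 1 = i := by
    rw [eval_posL, hX (j+1) (by omega) (by omega)]
  by_cases hj : j = n - 2
  · have hr : Lit.eval a (RL n j) ↔ n = i := by
      rw [RL_of_eq hj, eval_posL, hX n (by omega) le_rfl]
    unfold XOne
    rw [hp, hq, hr]
    omega
  · have hr : Lit.eval a (RL n j) ↔ j + 2 ≤ i := by
      rw [RL_of_ne hj, eval_negL]
      have h' := hY j h1 (by omega)
      constructor
      · intro hf
        by_contra hc
        rw [h'.mpr (by omega)] at hf
        exact Bool.noConfusion hf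
      · intro hge
        cases hy : a (Y j) with
        | false => rfl
        | true => exact absurd (h'.mp hy) (by omega)
    unfold XOne
    rw [hp, hq, hr]
    omega

/-- The `i`-th model: `xᵢ` true, other inputs false, `yⱼ = [i ≤ j+1]`. -/
def mdl (i : ℕ) : V → Bool := fun v => match v with
  | Sum.inl k => decide (k = i)
  | Sum.inr j => decide (i ≤ j + 1)

@[simp] lemma mdl_X (i k : ℕ) : mdl i (X k) = decide (k = i) := rfl
@[simp] lemma mdl_Y (i j : ℕ) : mdl i (Y j) = decide (i ≤ j + 1) := rfl

lemma sat_mdl {n i : ℕ} (hn : 4 ≤ n) (hi1 : 1 ≤ i) (hi2 : i ≤ n) :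
    CNF.Sat (mdl i) (epsCNF n) :=
  sat_of_selector hn hi1 hi2 (fun k _ _ => by simp) (fun j _ _ => by simp)

lemma sat_paUnits_iff {W : Type u} (a : W → Bool) (α : Set (Lit W)) :
    CNF.Sat a (paUnits α) ↔ ∀ l ∈ α, Lit.eval a l := by
  constructor
  · intro hs l hl
    have := hs {l} (Set.mem_image_of_mem _ hl)
    obtain ⟨l', hl', he⟩ := this
    rwa [Set.mem_singleton_iff.mp hl'] at he
  · rintro h C ⟨l, hl, rfl⟩
    exact ⟨l, rfl, h l hl⟩

lemma sat_union_iff {W : Type u} (a : W → Bool) (φ ψ : CNF W) :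
    CNF.Sat a (φ ∪ ψ) ↔ CNF.Sat a φ ∧ CNF.Sat a ψ := by
  constructor
  · intro h
    exact ⟨fun C hC => h C (Or.inl hC), fun C hC => h C (Or.inr hC)⟩
  · rintro ⟨h1, h2⟩ C (hC | hC)
    · exact h1 C hC
    · exact h2 C hC

/-! ### Propagation completeness -/

theorem pcon (n : ℕ) (hn : 4 ≤ n) : PCon (epsCNF n) (Xset n ∪ Yset n) := by
  intro α hcons hlits l hlvar hent
  set φ := epsCNF n ∪ paUnits α with hφdef
  have hφ : epsCNF n ⊆ φ := fun C hC => Or.inl hC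
  have hαD : ∀ l' ∈ α, UnitDeriv φ {l'} := fun l' hl' =>
    UnitDeriv.base (Or.inr (Set.mem_image_of_mem _ hl'))
  have hshape : ∀ l' : Lit V, l' ∈ α →
      (∃ k, 1 ≤ k ∧ k ≤ n ∧ l'.var = X k) ∨ (∃ j, 1 ≤ j ∧ j ≤ n - 3 ∧ l'.var = Y j) := by
    intro l' hl'
    have := hlits l' hl'
    simpa [Xset, Yset, Set.mem_union, Set.mem_setOf_eq] using this
  have main : ∀ m, 1 ≤ m → m ≤ n → (∃ l' ∈ α, ¬ Lit.eval (mdl m) l') →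
      UnitDeriv φ {negL (X m)} := by
    rintro m hm1 hm2 ⟨l', hl', hev⟩
    have hD := hαD l' hl'
    rcases hshape l' hl' with ⟨k, h1, h2, hv⟩ | ⟨j, h1, h2, hv⟩
    · obtain ⟨v, p⟩ := l'
      simp only at hv
      subst hv
      cases p with
      | false =>
          have hkm : k = m := by
            simp only [Lit.eval, mdl_X] at hev
            simpa using hev
          rw [← hkm]
          exact hD
      | true =>
          have hkm : k ≠ m := by
            simp only [Lit.eval, mdl_X] at hev
            simpa using hev
          exact claimE hn hφ h1 h2 hD m hm1 hm2 (Ne.symm hkm)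
    · obtain ⟨v, p⟩ := l'
      simp only at hv
      subst hv
      cases p with
      | false =>
          have hle : m ≤ j + 1 := by
            simp only [Lit.eval, mdl_Y] at hev
            simpa using hev
          exact claimD_X hn hφ h1 h2 hD m hm1 hle
      | true =>
          have hge : j + 2 ≤ m := by
            simp only [Lit.eval, mdl_Y] at hev
            simp at hev
            omega
          exact claimC_X hn hφ h1 h2 hD m hge hm2
  by_cases hex : ∃ i, 1 ≤ i ∧ i ≤ n ∧ ∀ l' ∈ α, Lit.eval (mdl i) l'
  · left
    obtain ⟨i₀, hi01, hi02, hi0⟩ := hex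
    have hent' : ∀ i, 1 ≤ i → i ≤ n → (∀ l' ∈ α, Lit.eval (mdl i) l') → Lit.eval (mdl i) l := by
      intro i h1 h2 hα
      exact hent (mdl i) ((sat_union_iff _ _ _).mpr
        ⟨sat_mdl hn h1 h2, (sat_paUnits_iff _ _).mpr hα⟩)
    have notP : ∀ m, 1 ≤ m → m ≤ n → ¬ Lit.eval (mdl m) l → UnitDeriv φ {negL (X m)} := by
      intro m h1 h2 hnev
      apply main m h1 h2
      by_contra hc
      push_neg at hc
      exact hnev (hent' m h1 h2 hc)
    simp only [Xset, Yset, Set.mem_union, Set.mem_setOf_eq] at hlvar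
    rcases hlvar with ⟨k, h1, h2, hv⟩ | ⟨j, h1, h2, hv⟩
    · obtain ⟨v, p⟩ := l
      simp only at hv
      subst hv
      cases p with
      | false => exact notP k h1 h2 (by simp [Lit.eval])
      | true =>
          have hik : k = i₀ := by
            have := hent' i₀ hi01 hi02 hi0
            simpa [Lit.eval] using this
          apply claimF hn hφ h1 h2
          intro m hm1 hm2 hmk
          exact notP m hm1 hm2 (by simp [Lit.eval]; omega)
    · obtain ⟨v, p⟩ := l
      simp only at hv
      subst hv
      cases p with
      | false =>
          apply claimA hn hφ h1 h2
          intro m hm1 hm2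
          exact notP m hm1 (by omega) (by simp [Lit.eval]; omega)
      | true =>
          apply claimB hn hφ h1 h2
          intro m hm1 hm2
          exact notP m (by omega) hm2 (by simp [Lit.eval]; omega)
  · right
    have hall : ∀ m, 1 ≤ m → m ≤ n → UnitDeriv φ {negL (X m)} := by
      intro m h1 h2
      apply main m h1 h2
      by_contra hc
      push_neg at hc
      exact hex ⟨m, h1, h2, hc⟩
    have hpos := claimB hn hφ (j := n-3) (by omega) le_rfl
      (fun m hm1 hm2 => hall m (by omega) hm2)
    have hneg := claimA hn hφ (j := n-3) (by omega) le_rfl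
      (fun m hm1 hm2 => hall m hm1 (by omega))
    exact ud_bot hpos (by simpa using hneg)


/-! ### Part 5 : the equivalences for the auxiliary variables -/

lemma part5 {n : ℕ} (hn : 4 ≤ n) (i : ℕ) (hi1 : 1 ≤ i) (hi2 : i ≤ n - 3)
    (a : V → Bool) (hs : CNF.Sat a (epsCNF n)) :
    (a (Y i) = false ↔ ∀ m, 1 ≤ m → m ≤ i + 1 → a (X m) = false) ∧
    (a (Y i) = true ↔ ∀ m, i + 2 ≤ m → m ≤ n → a (X m) = false) := by
  have hF := chainF hn hs i (by omega)
  rw [A_of_ne (by omega)] at hF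
  have hB := chainB hn hs i hi1 hi2
  constructor
  · constructor
    · intro hy m h1 h2
      exact hF.2 (by simp [hy]) m h1 h2
    · intro hall
      cases hy : a (Y i) with
      | false => rfl
      | true =>
          obtain ⟨k, ⟨hk1, hk2, hk3⟩, -⟩ := hF.1 (by simp [hy])
          rw [hall k hk1 hk2] at hk3
          exact Bool.noConfusion hk3
  · constructor
    · intro hy
      exact hB.1 hy
    · intro hall
      cases hy : a (Y i) with
      | true => rfl
      | false =>
          obtain ⟨k, ⟨hk1, hk2, hk3⟩, -⟩ := hB.2 hy
          rw [hall k hk1 hk2] at hk3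
          exact Bool.noConfusion hk3

/-! ### Part 1 : encoding -/

lemma part1 {n : ℕ} (hn : 4 ≤ n) : IsEncodingOn (epsCNF n) (Xset n) (EOpred n) := by
  intro a
  constructor
  · rintro ⟨i, ⟨hi1, hi2, hXi⟩, huniq⟩
    refine ⟨fun v => match v with
      | Sum.inl k => a (Sum.inl k)
      | Sum.inr j => decide (i ≤ j + 1), ?_, ?_⟩
    · rintro x ⟨k, -, -, rfl⟩
      rfl
    · apply sat_of_selector hn hi1 hi2
      · intro k h1 h2
        constructor
        · intro h
          exact huniq k ⟨h1, h2, h⟩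
        · rintro rfl
          exact hXi
      · intro j _ _
        show decide (i ≤ j + 1) = true ↔ i ≤ j + 1
        simp
  · rintro ⟨b, hagree, hs⟩
    obtain ⟨i, ⟨h1, h2, h3⟩, hu⟩ := EO_of_sat hn hs
    have hax : ∀ k, 1 ≤ k → k ≤ n → a (X k) = b (X k) :=
      fun k hk1 hk2 => (hagree (X k) ⟨k, hk1, hk2, rfl⟩).symm
    exact ⟨i, ⟨h1, h2, by rw [hax i h1 h2]; exact h3⟩,
      fun k ⟨hk1, hk2, hk3⟩ => hu k ⟨hk1, hk2, by rw [← hax k hk1 hk2]; exact hk3⟩⟩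

/-! ### Part 4 : the auxiliary variables -/

@[simp] lemma var_negate {W : Type u} (l : Lit W) : l.negate.var = l.var := rfl

lemma vars_epsCNF {n : ℕ} (hn : 4 ≤ n) :
    CNF.vars (epsCNF n) = Xset n ∪ Yset n := by
  ext v
  simp only [CNF.vars, Set.mem_iUnion, Set.mem_image, exists_prop]
  constructor
  · rintro ⟨C, hC, l, hl, rfl⟩
    rw [epsCNF_eq n hn] at hC
    simp only [Set.mem_iUnion, Set.mem_Icc, exists_prop] at hC
    obtain ⟨j, ⟨hj1, hj2⟩, hC⟩ := hC
    simp only [eps3, Set.mem_insert_iff, Set.mem_singleton_iff] at hC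
    have hvar : l.var = (A (j-1)).var ∨ l.var = X (j+1) ∨ l.var = (RL n j).var := by
      rcases hC with rfl | rfl | rfl | rfl
      · simp only [Set.mem_insert_iff, Set.mem_singleton_iff] at hl
        rcases hl with rfl | rfl <;> simp
      · simp only [Set.mem_insert_iff, Set.mem_singleton_iff] at hl
        rcases hl with rfl | rfl <;> simp
      · simp only [Set.mem_insert_iff, Set.mem_singleton_iff] at hl
        rcases hl with rfl | rfl <;> simp
      · simp only [Set.mem_insert_iff, Set.mem_singleton_iff] at hl
        rcases hl with rfl | rfl | rfl <;> simp
    rcases hvar with hv | hv | hv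
    · by_cases h0 : j = 1
      · exact Or.inl ⟨1, le_rfl, by omega, by
          rw [hv, h0, show (1:ℕ)-1 = 0 from rfl, A_zero]; rfl⟩
      · exact Or.inr ⟨j-1, by omega, by omega, by rw [hv, A_of_ne (by omega)]; rfl⟩
    · exact Or.inl ⟨j+1, by omega, by omega, hv⟩
    · by_cases hj : j = n - 2
      · exact Or.inl ⟨n, by omega, le_rfl, by rw [hv, RL_of_eq hj]; rfl⟩
      · exact Or.inr ⟨j, hj1, by omega, by rw [hv, RL_of_ne hj]; rfl⟩
  · rintro (⟨k, hk1, hk2, rfl⟩ | ⟨j, hj1, hj2, rfl⟩)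
    · by_cases hk : k = 1
      · subst hk
        refine ⟨{(A (1-1)).negate, negL (X (1+1))},
          mem_block (j := 1) hn (Set.Subset.refl _) le_rfl (by omega) (by simp [eps3]),
          (A (1-1)).negate, by simp, ?_⟩
        rw [show (1:ℕ)-1 = 0 from rfl, A_zero]
        rfl
      by_cases hk2' : k ≤ n - 1
      · refine ⟨{(A (k-1-1)).negate, negL (X (k-1+1))},
          mem_block (j := k-1) hn (Set.Subset.refl _) (by omega) (by omega) (by simp [eps3]),
          negL (X (k-1+1)), by simp, ?_⟩
        rw [show k-1+1 = k by omega]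
        rfl
      · refine ⟨{A (n-2-1), posL (X (n-2+1)), RL n (n-2)},
          mem_block (j := n-2) hn (Set.Subset.refl _) (by omega) le_rfl (by simp [eps3]),
          RL n (n-2), by simp, ?_⟩
        rw [RL_of_eq rfl, show n = k by omega]
        rfl
    · refine ⟨{A (j-1), posL (X (j+1)), RL n j},
        mem_block (j := j) hn (Set.Subset.refl _) hj1 (by omega) (by simp [eps3]),
        RL n j, by simp, ?_⟩
      rw [RL_of_ne (by omega)]
      rfl

lemma Y_injective : Function.Injective (Y : ℕ → V) := fun a b h => by
  simpa [Y] using h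

lemma part4 {n : ℕ} (hn : 4 ≤ n) : (CNF.vars (epsCNF n) \ Xset n).ncard = n - 3 := by
  have h1 : CNF.vars (epsCNF n) \ Xset n = Yset n := by
    rw [vars_epsCNF hn]
    ext v
    simp only [Set.mem_diff, Set.mem_union]
    constructor
    · rintro ⟨h | h, hnx⟩
      · exact absurd h hnx
      · exact h
    · intro h
      refine ⟨Or.inr h, ?_⟩
      obtain ⟨j, -, -, rfl⟩ := h
      rintro ⟨k, -, -, hk⟩
      exact absurd hk (by simp [X, Y])
  rw [h1]
  have h2 : Yset n = Y '' (Set.Icc 1 (n-3)) := by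
    ext v
    simp only [Yset, Set.mem_setOf_eq, Set.mem_image, Set.mem_Icc]
    constructor
    · rintro ⟨j, h1', h2', rfl⟩
      exact ⟨j, ⟨h1', h2'⟩, rfl⟩
    · rintro ⟨j, ⟨h1', h2'⟩, rfl⟩
      exact ⟨j, h1', h2', rfl⟩
  rw [h2, Set.ncard_image_of_injective _ Y_injective, ← Finset.coe_Icc,
    Set.ncard_coe_finset, Nat.card_Icc]
  omega


/-! ### Part 3 : counting the clauses -/

lemma negate_injective {W : Type u} : Function.Injective (Lit.negate : Lit W → Lit W) :=
  fun a b h => by rw [← negate_negate a, h, negate_negate]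

lemma A_eq_A_iff {k k' : ℕ} : A k = A k' ↔ k = k' := by
  constructor
  · intro h
    by_cases h0 : k = 0 <;> by_cases h0' : k' = 0
    · omega
    · rw [A, A, if_pos h0, if_neg h0'] at h
      exact absurd (congrArg Lit.var h) (by simp [X, Y])
    · rw [A, A, if_neg h0, if_pos h0'] at h
      exact absurd (congrArg Lit.var h) (by simp [X, Y])
    · have := congrArg Lit.var h
      rw [A, A, if_neg h0, if_neg h0'] at this
      simpa [Y] using this
  · rintro rfl; rfl

lemma A_ne_negL (j : ℕ) (w : V) : A j ≠ negL w := by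
  rw [A]; split <;> exact posL_ne_negL' _ _

lemma A_negate_ne_negLX {j k : ℕ} (hk : 1 ≤ k) : (A j).negate ≠ negL (X (k+1)) := by
  rw [A]; split
  · rw [negate_posL]; exact negL_ne_negL (X_ne_X (by omega))
  · rw [negate_posL]; exact negL_ne_negL (Y_ne_X _ _)

lemma A_negate_ne_negLY {j k : ℕ} (h : j ≠ k) : (A j).negate ≠ negL (Y k) := by
  rw [A]; split
  · rw [negate_posL]; exact negL_ne_negL (X_ne_Y _ _)
  · rw [negate_posL]; exact negL_ne_negL (Y_ne_Y h)

lemma A_negate_ne_posLY (j k : ℕ) : (A j).negate ≠ posL (Y k) := by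
  rw [A]; split <;> (rw [negate_posL]; exact negL_ne_posL' _ _)

lemma pair_ne_triple {α : Type v} {x y a b c : α} (hab : a ≠ b) (hac : a ≠ c) (hbc : b ≠ c) :
    ({x, y} : Set α) ≠ {a, b, c} := by
  intro h
  have ha : a ∈ ({x, y} : Set α) := h ▸ (by simp)
  have hb : b ∈ ({x, y} : Set α) := h ▸ (by simp)
  have hc : c ∈ ({x, y} : Set α) := h ▸ (by simp)
  simp only [Set.mem_insert_iff, Set.mem_singleton_iff] at ha hb hc
  rcases ha with rfl | rfl <;> rcases hb with rfl | rfl <;> rcases hc with rfl | rfl <;> tauto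

lemma pair_ne_pair_right {α : Type v} {x1 x2 y1 y2 : α} (h1 : x2 ≠ y1) (h2 : x2 ≠ y2) :
    ({x1, x2} : Set α) ≠ {y1, y2} := by
  intro h
  rw [Set.pair_eq_pair_iff] at h
  rcases h with ⟨-, h⟩ | ⟨-, h⟩
  · exact h2 h
  · exact h1 h

lemma pair_ne_pair_left {α : Type v} {x1 x2 y1 y2 : α} (h1 : x1 ≠ y1) (h2 : x1 ≠ y2) :
    ({x1, x2} : Set α) ≠ {y1, y2} := by
  intro h
  rw [Set.pair_eq_pair_iff] at h
  rcases h with ⟨h, -⟩ | ⟨h, -⟩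
  · exact h1 h
  · exact h2 h

noncomputable local instance : DecidableEq (Clause V) := Classical.decEq _

/-- The `t`-th clause of the `j`-th regular block. -/
def UCl (j : ℕ) : ℕ → Clause V
  | 0 => {(A (j-1)).negate, negL (X (j+1))}
  | 1 => {(A (j-1)).negate, posL (Y j)}
  | 2 => {negL (X (j+1)), posL (Y j)}
  | _ => {A (j-1), posL (X (j+1)), negL (Y j)}

lemma eps3_eq_UCl (j : ℕ) :
    eps3 (A (j-1)) (posL (X (j+1))) (negL (Y j)) = {UCl j 0, UCl j 1, UCl j 2, UCl j 3} := rfl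

lemma UCl_injOn {n : ℕ} (hn : 4 ≤ n) : ∀ j t j' t', 1 ≤ j → j ≤ n-3 → 1 ≤ j' → j' ≤ n-3 →
    t < 4 → t' < 4 → UCl j t = UCl j' t' → j = j' ∧ t = t' := by
  intro j t j' t' hj1 hj2 hj1' hj2' ht ht' h
  have dAX : A (j-1) ≠ posL (X (j+1)) := d_AX hn hj1 (by omega)
  have dAX' : A (j'-1) ≠ posL (X (j'+1)) := d_AX hn hj1' (by omega)
  interval_cases t <;> interval_cases t' <;> simp only [UCl] at h
  · rw [Set.pair_eq_pair_iff] at h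
    rcases h with ⟨-, h2⟩ | ⟨h1, -⟩
    · have := congrArg Lit.var h2
      simp only [var_negL, X, Sum.inl.injEq] at this
      exact ⟨by omega, rfl⟩
    · exact absurd h1 (A_negate_ne_negLX hj1')
  · rw [Set.pair_eq_pair_iff] at h
    rcases h with ⟨-, h2⟩ | ⟨h1, -⟩
    · exact absurd h2 (negL_ne_posL' _ _)
    · exact absurd h1 (A_negate_ne_posLY _ _)
  · rw [Set.pair_eq_pair_iff] at h
    rcases h with ⟨h1, -⟩ | ⟨h1, -⟩
    · exact absurd h1 (A_negate_ne_negLX hj1')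
    · exact absurd h1 (A_negate_ne_posLY _ _)
  · exact absurd h (pair_ne_triple dAX' (A_ne_negL _ _) (posL_ne_negL' _ _))
  · rw [Set.pair_eq_pair_iff] at h
    rcases h with ⟨-, h2⟩ | ⟨h1, -⟩
    · exact absurd h2 (posL_ne_negL' _ _)
    · exact absurd h1 (A_negate_ne_negLX hj1')
  · rw [Set.pair_eq_pair_iff] at h
    rcases h with ⟨h1, h2⟩ | ⟨h1, -⟩
    · have := A_eq_A_iff.mp (negate_injective h1)
      exact ⟨by omega, rfl⟩
    · exact absurd h1 (A_negate_ne_posLY _ _)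
  · rw [Set.pair_eq_pair_iff] at h
    rcases h with ⟨h1, -⟩ | ⟨h1, -⟩
    · exact absurd h1 (A_negate_ne_negLX hj1')
    · exact absurd h1 (A_negate_ne_posLY _ _)
  · exact absurd h (pair_ne_triple dAX' (A_ne_negL _ _) (posL_ne_negL' _ _))
  · rw [Set.pair_eq_pair_iff] at h
    rcases h with ⟨h1, -⟩ | ⟨-, h1⟩
    · exact absurd h1.symm (A_negate_ne_negLX hj1)
    · exact absurd h1.symm (A_negate_ne_posLY _ _)
  · rw [Set.pair_eq_pair_iff] at h
    rcases h with ⟨h1, -⟩ | ⟨h1, -⟩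
    · exact absurd h1.symm (A_negate_ne_negLX hj1)
    · exact absurd h1 (negL_ne_posL' _ _)
  · rw [Set.pair_eq_pair_iff] at h
    rcases h with ⟨h1, -⟩ | ⟨h1, -⟩
    · have := congrArg Lit.var h1
      simp only [var_negL, X, Sum.inl.injEq] at this
      exact ⟨by omega, rfl⟩
    · exact absurd h1 (negL_ne_posL' _ _)
  · exact absurd h (pair_ne_triple dAX' (A_ne_negL _ _) (posL_ne_negL' _ _))
  · exact absurd h.symm (pair_ne_triple dAX (A_ne_negL _ _) (posL_ne_negL' _ _))
  · exact absurd h.symm (pair_ne_triple dAX (A_ne_negL _ _) (posL_ne_negL' _ _))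
  · exact absurd h.symm (pair_ne_triple dAX (A_ne_negL _ _) (posL_ne_negL' _ _))
  · have hm : negL (Y j) ∈ ({A (j'-1), posL (X (j'+1)), negL (Y j')} : Set (Lit V)) :=
      h ▸ (by simp)
    simp only [Set.mem_insert_iff, Set.mem_singleton_iff] at hm
    rcases hm with hm | hm | hm
    · exact absurd hm.symm (A_ne_negL _ _)
    · exact absurd hm.symm (posL_ne_negL' _ _)
    · have := congrArg Lit.var hm
      simp only [var_negL, Y, Sum.inr.injEq] at this
      exact ⟨this, rfl⟩

lemma U_eq_image {n : ℕ} :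
    (⋃ j ∈ Set.Icc 1 (n-3), eps3 (A (j-1)) (posL (X (j+1))) (negL (Y j)))
      = ↑((Finset.Icc 1 (n-3) ×ˢ Finset.range 4).image fun p => UCl p.1 p.2) := by
  ext C
  simp only [Set.mem_iUnion, Set.mem_Icc, exists_prop, Finset.coe_image, Set.mem_image,
    Finset.mem_coe, Finset.mem_product, Finset.mem_Icc, Finset.mem_range]
  constructor
  · rintro ⟨j, hj, hC⟩
    rw [eps3_eq_UCl] at hC
    simp only [Set.mem_insert_iff, Set.mem_singleton_iff] at hC
    rcases hC with rfl | rfl | rfl | rfl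
    exacts [⟨(j, 0), ⟨hj, by omega⟩, rfl⟩, ⟨(j, 1), ⟨hj, by omega⟩, rfl⟩,
      ⟨(j, 2), ⟨hj, by omega⟩, rfl⟩, ⟨(j, 3), ⟨hj, by omega⟩, rfl⟩]
  · rintro ⟨⟨j, t⟩, ⟨hj, ht⟩, rfl⟩
    refine ⟨j, hj, ?_⟩
    rw [eps3_eq_UCl]
    interval_cases t <;> simp

lemma U_card {n : ℕ} (hn : 4 ≤ n) :
    (⋃ j ∈ Set.Icc 1 (n-3), eps3 (A (j-1)) (posL (X (j+1))) (negL (Y j))).ncard = 4*(n-3) := by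
  rw [U_eq_image, Set.ncard_coe_finset, Finset.card_image_of_injOn, Finset.card_product,
    Finset.card_range, Nat.card_Icc]
  · omega
  · rintro ⟨j, t⟩ hm ⟨j', t'⟩ hm' h
    simp only [Finset.coe_product, Set.mem_prod, Finset.mem_coe, Finset.mem_Icc,
      Finset.mem_range] at hm hm'
    have := UCl_injOn hn j t j' t' hm.1.1 hm.1.2 hm'.1.1 hm'.1.2 hm.2 hm'.2 h
    exact Prod.ext this.1 this.2

lemma L_card {n : ℕ} (hn : 4 ≤ n) :
    (eps3 (A (n-3)) (posL (X (n-1))) (posL (X n))).ncard = 4 := by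
  rw [A_of_ne (by omega)]
  show ({{negL (Y (n-3)), negL (X (n-1))}, {negL (Y (n-3)), negL (X n)},
    {negL (X (n-1)), negL (X n)},
    {posL (Y (n-3)), posL (X (n-1)), posL (X n)}} : CNF V).ncard = 4
  have d12 : ({negL (Y (n-3)), negL (X (n-1))} : Clause V) ≠ {negL (Y (n-3)), negL (X n)} :=
    pair_ne_pair_right (negL_ne_negL (X_ne_Y _ _)) (negL_ne_negL (X_ne_X (by omega)))
  have d13 : ({negL (Y (n-3)), negL (X (n-1))} : Clause V) ≠ {negL (X (n-1)), negL (X n)} :=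
    pair_ne_pair_left (negL_ne_negL (Y_ne_X _ _)) (negL_ne_negL (Y_ne_X _ _))
  have d23 : ({negL (Y (n-3)), negL (X n)} : Clause V) ≠ {negL (X (n-1)), negL (X n)} :=
    pair_ne_pair_left (negL_ne_negL (Y_ne_X _ _)) (negL_ne_negL (Y_ne_X _ _))
  have dT : ∀ (x y : Lit V), ({x, y} : Clause V) ≠
      {posL (Y (n-3)), posL (X (n-1)), posL (X n)} := fun x y =>
    pair_ne_triple (posL_ne_posL (Y_ne_X _ _)) (posL_ne_posL (Y_ne_X _ _))
      (posL_ne_posL (X_ne_X (by omega)))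
  have m1 : ({negL (Y (n-3)), negL (X (n-1))} : Clause V) ∉
      ({{negL (Y (n-3)), negL (X n)}, {negL (X (n-1)), negL (X n)},
        {posL (Y (n-3)), posL (X (n-1)), posL (X n)}} : CNF V) := by
    intro hm
    rcases hm with h | h | h
    · exact d12 h
    · exact d13 h
    · exact dT _ _ h
  have m2 : ({negL (Y (n-3)), negL (X n)} : Clause V) ∉
      ({{negL (X (n-1)), negL (X n)},
        {posL (Y (n-3)), posL (X (n-1)), posL (X n)}} : CNF V) := by
    intro hm
    rcases hm with h | h
    · exact d23 h
    · exact dT _ _ h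
  have m3 : ({negL (X (n-1)), negL (X n)} : Clause V) ∉
      ({{posL (Y (n-3)), posL (X (n-1)), posL (X n)}} : CNF V) := by
    intro hm
    exact dT _ _ hm
  rw [Set.ncard_insert_of_notMem m1 (((Set.finite_singleton _).insert _).insert _),
    Set.ncard_insert_of_notMem m2 ((Set.finite_singleton _).insert _),
    Set.ncard_insert_of_notMem m3 (Set.finite_singleton _),
    Set.ncard_singleton]

lemma part3 {n : ℕ} (hn : 4 ≤ n) : (epsCNF n).ncard = 4 * n - 8 := by
  rw [epsCNF]
  have hUfin : (⋃ j ∈ Set.Icc 1 (n-3),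
      eps3 (A (j-1)) (posL (X (j+1))) (negL (Y j))).Finite := by
    rw [U_eq_image]
    exact Finset.finite_toSet _
  have hLfin : (eps3 (A (n-3)) (posL (X (n-1))) (posL (X n))).Finite := by
    rw [eps3]
    exact (((Set.finite_singleton _).insert _).insert _).insert _
  have hdisj : Disjoint (⋃ j ∈ Set.Icc 1 (n-3), eps3 (A (j-1)) (posL (X (j+1))) (negL (Y j)))
      (eps3 (A (n-3)) (posL (X (n-1))) (posL (X n))) := by
    rw [Set.disjoint_left]
    intro C hCU hCL
    simp only [Set.mem_iUnion, Set.mem_Icc, exists_prop] at hCU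
    obtain ⟨j, ⟨hj1, hj2⟩, hC⟩ := hCU
    rw [eps3_eq_UCl] at hC
    rw [A_of_ne (show n-3 ≠ 0 by omega)] at hCL
    simp only [eps3, negate_posL, Set.mem_insert_iff, Set.mem_singleton_iff] at hC hCL
    have dAX : A (j-1) ≠ posL (X (j+1)) := d_AX hn hj1 (by omega)
    have dT : ∀ (x y : Lit V), ({x, y} : Clause V) ≠
        {posL (Y (n-3)), posL (X (n-1)), posL (X n)} := fun x y =>
      pair_ne_triple (posL_ne_posL (Y_ne_X _ _)) (posL_ne_posL (Y_ne_X _ _))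
        (posL_ne_posL (X_ne_X (by omega)))
    rcases hC with rfl | rfl | rfl | rfl
    · simp only [UCl] at hCL
      rcases hCL with h | h | h | h
      · exact pair_ne_pair_right (negL_ne_negL (X_ne_Y _ _))
          (negL_ne_negL (X_ne_X (by omega))) h
      · exact pair_ne_pair_right (negL_ne_negL (X_ne_Y _ _))
          (negL_ne_negL (X_ne_X (by omega))) h
      · exact pair_ne_pair_right (negL_ne_negL (X_ne_X (by omega)))
          (negL_ne_negL (X_ne_X (by omega))) h
      · exact dT _ _ h
    · simp only [UCl] at hCL
      rcases hCL with h | h | h | h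
      · exact pair_ne_pair_right (posL_ne_negL' _ _) (posL_ne_negL' _ _) h
      · exact pair_ne_pair_right (posL_ne_negL' _ _) (posL_ne_negL' _ _) h
      · exact pair_ne_pair_right (posL_ne_negL' _ _) (posL_ne_negL' _ _) h
      · exact dT _ _ h
    · simp only [UCl] at hCL
      rcases hCL with h | h | h | h
      · exact pair_ne_pair_right (posL_ne_negL' _ _) (posL_ne_negL' _ _) h
      · exact pair_ne_pair_right (posL_ne_negL' _ _) (posL_ne_negL' _ _) h
      · exact pair_ne_pair_right (posL_ne_negL' _ _) (posL_ne_negL' _ _) h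
      · exact dT _ _ h
    · simp only [UCl] at hCL
      rcases hCL with h | h | h | h
      · exact pair_ne_triple dAX (A_ne_negL _ _) (posL_ne_negL' _ _) h.symm
      · exact pair_ne_triple dAX (A_ne_negL _ _) (posL_ne_negL' _ _) h.symm
      · exact pair_ne_triple dAX (A_ne_negL _ _) (posL_ne_negL' _ _) h.symm
      · have hm : negL (Y j) ∈ ({posL (Y (n-3)), posL (X (n-1)), posL (X n)} : Set (Lit V)) :=
          h ▸ (by simp)
        simp only [Set.mem_insert_iff, Set.mem_singleton_iff] at hm
        rcases hm with hm | hm | hm <;> exact negL_ne_posL' _ _ hm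
  rw [Set.ncard_union_eq hdisj hUfin hLfin, U_card hn, L_card hn]
  omega

end Stmt5Aux


/-- For every `n ≥ 4`, the formula `εₙ(x₁,…,xₙ)` is a
propagation complete encoding of `EO(x₁,…,xₙ)` with `4n−8` clauses and `n−3`
auxiliary variables; moreover for each auxiliary variable `yᵢ` (`1 ≤ i ≤ n−3`),
`εₙ` implies the equivalences `¬yᵢ ↔ (¬x₁ ∧ … ∧ ¬x_{i+1})` and
`yᵢ ↔ (¬x_{i+2} ∧ … ∧ ¬xₙ)`. -/
theorem stmt5 (n : ℕ) (hn : 4 ≤ n) :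
    IsEncodingOn (Eps.epsCNF n) (Eps.Xset n) (Eps.EOpred n) ∧
    PCon (Eps.epsCNF n) (Eps.Xset n ∪ Eps.Yset n) ∧
    (Eps.epsCNF n).ncard = 4 * n - 8 ∧
    (CNF.vars (Eps.epsCNF n) \ Eps.Xset n).ncard = n - 3 ∧
    (∀ i, 1 ≤ i → i ≤ n - 3 → ∀ a : Eps.V → Bool, CNF.Sat a (Eps.epsCNF n) →
      ((a (Eps.Y i) = false ↔ ∀ m, 1 ≤ m → m ≤ i + 1 → a (Eps.X m) = false) ∧
       (a (Eps.Y i) = true ↔ ∀ m, i + 2 ≤ m → m ≤ n → a (Eps.X m) = false))) :=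
  ⟨Stmt5Aux.part1 hn, Stmt5Aux.pcon n hn, Stmt5Aux.part3 hn, Stmt5Aux.part4 hn,
    fun i h1 h2 a hs => Stmt5Aux.part5 hn i h1 h2 a hs⟩
end

section
/- Assume φ(x,x',y) ∧ eo*(x) is a PC encoding of a constraint f(x,x'), and eo'(x,z) is a PC encoding of EO(x) with auxiliary variables z such that for every literal l on a variable of z there is a partial assignment h(l) ⊆ lit(x) with eo'(x,z) ⊨ (l ↔ h(l)) (where h(l) is read as the conjunction of its literals). Then φ(x,x',y) ∧ eo'(x,z) is a PC encoding of f(x,x'). -/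
set_option autoImplicit false

universe u v

/-- `amo*(x)`: all the clauses `¬u ∨ ¬v` for distinct `u, v ∈ x`. -/
def amoStar {V : Type u} (x : Set V) : CNF V :=
  {C | ∃ u ∈ x, ∃ v ∈ x, u ≠ v ∧ C = ({negL u, negL v} : Clause V)}

/-- `eo*(x) = amo*(x)` together with the clause `∨_{v ∈ x} v`. -/
def eoStar {V : Type u} (x : Set V) : CNF V :=
  amoStar x ∪ {(fun v => posL v) '' x}

/-- The exactly-one constraint on the variables in `x`. -/
def EOpredS {V : Type u} (x : Set V) (a : V → Bool) : Prop :=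
  ∃! v, v ∈ x ∧ a v = true

/-!
Unit propagation in `φ ∧ eo'` simulates unit propagation in `φ ∧ eo*(x)`: `eo'` is propagation
complete and implies every clause of `eo*(x)`, so whatever such a clause propagates is also
propagated by `eo'` (or `eo'` finds a conflict). Now let `β` be the set of literals derived by
unit propagation in `φ ∧ eo' ∧ α`, assuming no conflict. If some input or `y`-literal `p` is not
in `β`, propagation completeness of `φ ∧ eo*(x)` gives a model of `φ ∧ eo*(x)` satisfying the
part of `β` on `x ∪ x' ∪ y` and falsifying `p`; the encoding `eo'` extends it to `z`, and the
`z`-literals of `β` hold there because their defining assignments `h(g)` are derived as well.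
A literal `l` on `z` not in `β` has some literal of `h(l)` outside `β`, falsified by such a model.
-/

open Set

section

variable {V : Type u}

theorem Lit.eval_negate {a : V → Bool} {l : Lit V} : Lit.eval a l.negate ↔ ¬ Lit.eval a l := by
  obtain ⟨v, p⟩ := l
  cases h : a v <;> cases p <;> simp [Lit.eval, Lit.negate, h]

namespace CNF

theorem sat_union_s6 {φ ψ : CNF V} {a : V → Bool} : Sat a (φ ∪ ψ) ↔ Sat a φ ∧ Sat a ψ := by
  simp only [Sat, mem_union, or_imp, forall_and]

theorem sat_paUnits_s6 {α : Set (Lit V)} {a : V → Bool} :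
    Sat a (paUnits α) ↔ ∀ l ∈ α, Lit.eval a l := by
  simp [Sat, paUnits, Clause.Sat]

theorem mem_vars {φ : CNF V} {C : Clause V} {l : Lit V} (hC : C ∈ φ) (hl : l ∈ C) :
    l.var ∈ vars φ :=
  mem_biUnion hC (mem_image_of_mem _ hl)

theorem vars_union (φ ψ : CNF V) : vars (φ ∪ ψ) = vars φ ∪ vars ψ :=
  biUnion_union _ _ _

theorem vars_paUnits (α : Set (Lit V)) : vars (paUnits α) = Lit.var '' α := by
  ext v
  simp [vars, paUnits, eq_comm]

theorem Sat.of_eqOn_vars {φ : CNF V} {a b : V → Bool} (h : EqOn a b (vars φ))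
    (hb : Sat b φ) : Sat a φ := by
  intro C hC
  obtain ⟨l, hl, hbl⟩ := hb C hC
  exact ⟨l, hl, (h (mem_vars hC hl)).trans hbl⟩

end CNF

namespace UnitDeriv

variable {φ ψ : CNF V} {C : Clause V}

theorem of_forall_mem (h : ∀ D ∈ φ, UnitDeriv ψ D) (hd : UnitDeriv φ C) : UnitDeriv ψ C := by
  induction hd with
  | base hD => exact h _ hD
  | step l hl _ _ ih₁ ih₂ => exact .step l hl ih₁ ih₂

theorem mono (h : φ ⊆ ψ) (hd : UnitDeriv φ C) : UnitDeriv ψ C :=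
  hd.of_forall_mem fun _ hD => .base (h hD)

theorem of_union_paUnits {α : Set (Lit V)} (hφ : φ ⊆ ψ) (hα : ∀ l ∈ α, UnitDeriv ψ {l})
    (hd : UnitDeriv (φ ∪ paUnits α) C) : UnitDeriv ψ C :=
  hd.of_forall_mem <| by
    rintro D (hD | ⟨l, hl, rfl⟩)
    · exact .base (hφ hD)
    · exact hα l hl

theorem exists_mem_superset (hd : UnitDeriv φ C) : ∃ D ∈ φ, C ⊆ D := by
  induction hd with
  | base hD => exact ⟨_, hD, subset_rfl⟩
  | step _ _ _ _ ih _ =>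
    obtain ⟨D, hD, hsub⟩ := ih
    exact ⟨D, hD, sdiff_subset.trans hsub⟩

theorem var_mem_vars {l : Lit V} (hd : UnitDeriv φ {l}) : l.var ∈ CNF.vars φ := by
  obtain ⟨D, hD, hsub⟩ := hd.exists_mem_superset
  exact CNF.mem_vars hD (hsub rfl)

theorem empty_of_negate {l : Lit V} (h : UnitDeriv φ {l}) (hn : UnitDeriv φ {l.negate}) :
    UnitDeriv φ ∅ := by
  simpa using h.step l (mem_singleton l) hn

theorem empty_of_not_consistentPA {α : Set (Lit V)} (h : ¬ ConsistentPA α) :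
    UnitDeriv (φ ∪ paUnits α) ∅ := by
  simp only [ConsistentPA, not_forall, not_not] at h
  obtain ⟨l, hl, hnl⟩ := h
  exact empty_of_negate (.base (Or.inr ⟨l, hl, rfl⟩)) (.base (Or.inr ⟨_, hnl, rfl⟩))

end UnitDeriv

theorem PCon.unitDeriv_of_entails {χ Γ : CNF V} {W : Set V} {α : Set (Lit V)} {l : Lit V}
    (hpc : PCon χ W) (hχ : χ ⊆ Γ) (hαW : LitsOn α W) (hα : ∀ g ∈ α, UnitDeriv Γ {g})
    (hl : l.var ∈ W) (hent : CNF.Entails (χ ∪ paUnits α) l) :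
    UnitDeriv Γ {l} ∨ UnitDeriv Γ ∅ := by
  by_cases hcons : ConsistentPA α
  · exact (hpc α hcons hαW l hl hent).imp (.of_union_paUnits hχ hα) (.of_union_paUnits hχ hα)
  · exact Or.inr ((UnitDeriv.empty_of_not_consistentPA hcons).of_union_paUnits hχ hα)

theorem PCon.urcon {φ : CNF V} {W : Set V} (hpc : PCon φ W) (hv : CNF.vars φ ⊆ W) :
    URCon φ W := by
  intro α hcons hαW hunsat
  by_cases hW : W.Nonempty
  · obtain ⟨w, hw⟩ := hW
    have hent (l : Lit V) : CNF.Entails (φ ∪ paUnits α) l := fun a ha => (hunsat ⟨a, ha⟩).elim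
    rcases hpc α hcons hαW (posL w) hw (hent _) with hpos | h
    · rcases hpc α hcons hαW (negL w) hw (hent _) with hneg | h
      · exact hpos.empty_of_negate hneg
      · exact h
    · exact h
  · obtain ⟨C, hC, hCsat⟩ : ∃ C ∈ φ ∪ paUnits α, ¬ Clause.Sat (fun _ => true) C := by
      have : ¬ CNF.Sat (fun _ => true) (φ ∪ paUnits α) := fun h => hunsat ⟨_, h⟩
      simpa [CNF.Sat] using this
    have hCvars : ∀ l ∈ C, l.var ∈ W := by
      rcases hC with hC | ⟨g, hg, rfl⟩
      · exact fun l hl => hv (CNF.mem_vars hC hl)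
      · rintro l rfl
        exact hαW l hg
    obtain rfl : C = ∅ := eq_empty_of_forall_notMem fun l hl => hW ⟨l.var, hCvars l hl⟩
    exact .base hC

/-- The clauses that may be added to `Γ` without changing the literals that unit propagation
derives from it, up to a conflict (see `UnitDeriv.of_union_unitAbsorbs`). -/
def UnitAbsorbs (Γ : CNF V) (C : Clause V) : Prop :=
  ∀ D ⊆ C, D.Subsingleton → (∀ g ∈ C \ D, UnitDeriv Γ {g.negate}) →
    UnitDeriv Γ D ∨ UnitDeriv Γ ∅

theorem PCon.unitAbsorbs {χ Γ : CNF V} {W : Set V} {C : Clause V} (hpc : PCon χ W)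
    (hv : CNF.vars χ ⊆ W) (hχ : χ ⊆ Γ) (hCW : ∀ g ∈ C, g.var ∈ W)
    (hC : ∀ a, CNF.Sat a χ → Clause.Sat a C) : UnitAbsorbs Γ C := by
  intro D hDC hD hneg
  set α := Lit.negate '' (C \ D)
  have hαW : LitsOn α W := by
    rintro _ ⟨g, hg, rfl⟩
    exact hCW g hg.1
  have hα : ∀ g ∈ α, UnitDeriv Γ {g} := by
    rintro _ ⟨g, hg, rfl⟩
    exact hneg g hg
  have hsat : ∀ a, CNF.Sat a (χ ∪ paUnits α) → ∃ g ∈ D, Lit.eval a g := by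
    intro a ha
    rw [CNF.sat_union_s6, CNF.sat_paUnits_s6] at ha
    obtain ⟨g, hgC, hg⟩ := hC a ha.1
    refine ⟨g, ?_, hg⟩
    by_contra hgD
    exact Lit.eval_negate.mp (ha.2 _ ⟨g, ⟨hgC, hgD⟩, rfl⟩) hg
  rcases hD.eq_empty_or_singleton with rfl | ⟨m, rfl⟩
  · refine Or.inr ?_
    by_cases hcons : ConsistentPA α
    · refine (hpc.urcon hv α hcons hαW ?_).of_union_paUnits hχ hα
      rintro ⟨a, ha⟩
      simpa using hsat a ha
    · exact (UnitDeriv.empty_of_not_consistentPA hcons).of_union_paUnits hχ hα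
  · refine hpc.unitDeriv_of_entails hχ hαW hα (hCW m (hDC rfl)) fun a ha => ?_
    obtain ⟨g, rfl, hg⟩ := hsat a ha
    exact hg

namespace UnitDeriv

variable {Γ ψ : CNF V} {E : Clause V}

theorem unitAbsorbed (habs : ∀ C ∈ ψ, UnitAbsorbs Γ C) (hd : UnitDeriv (Γ ∪ ψ) E) :
    UnitDeriv Γ ∅ ∨ UnitDeriv Γ E ∨
      ∃ C ∈ ψ, E ⊆ C ∧ ∀ g ∈ C \ E, UnitDeriv Γ {g.negate} := by
  induction hd with
  | base hE =>
    rcases hE with hE | hE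
    · exact Or.inr (Or.inl (.base hE))
    · exact Or.inr (Or.inr ⟨_, hE, subset_rfl, by simp⟩)
  | step l hl _ _ ihC ihneg =>
    have hneg : UnitDeriv Γ ∅ ∨ UnitDeriv Γ {l.negate} := by
      rcases ihneg with h | h | ⟨C, hC, hsub, hrest⟩
      · exact Or.inl h
      · exact Or.inr h
      · exact (habs C hC _ hsub subsingleton_singleton hrest).symm
    rcases hneg with h | hneg
    · exact Or.inl h
    rcases ihC with h | h | ⟨C, hC, hsub, hrest⟩
    · exact Or.inl h
    · exact Or.inr (Or.inl (h.step l hl hneg))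
    · refine Or.inr (Or.inr ⟨C, hC, sdiff_subset.trans hsub, fun g hg => ?_⟩)
      by_cases hgl : g = l
      · exact hgl ▸ hneg
      · exact hrest g ⟨hg.1, fun hgE => hg.2 ⟨hgE, hgl⟩⟩

theorem of_union_unitAbsorbs (habs : ∀ C ∈ ψ, UnitAbsorbs Γ C) (hd : UnitDeriv (Γ ∪ ψ) E)
    (hE : E.Subsingleton) : UnitDeriv Γ E ∨ UnitDeriv Γ ∅ := by
  rcases hd.unitAbsorbed habs with h | h | ⟨C, hC, hsub, hrest⟩
  · exact Or.inr h
  · exact Or.inl h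
  · exact habs C hC E hsub hE hrest

end UnitDeriv

/-- `χ(X, Z)` is a propagation complete encoding of the constraint `ψ(X)` whose auxiliary
variables `Z` are defined by partial assignments on `X` (the rôle of `eo'` for `eo*(x)`). -/
structure IsPCReencoding (χ ψ : CNF V) (X Z : Set V) : Prop where
  vars_subset : CNF.vars χ ⊆ X ∪ Z
  vars_constraint_subset : CNF.vars ψ ⊆ X
  disjoint : Disjoint X Z
  sat_of_sat : ∀ a, CNF.Sat a χ → CNF.Sat a ψ
  exists_sat : ∀ b, CNF.Sat b ψ → ∃ c, CNF.Sat c χ ∧ EqOn c b X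
  pcon : PCon χ (X ∪ Z)
  defined : ∀ l : Lit V, l.var ∈ Z → ∃ h : Set (Lit V), LitsOn h X ∧
    ∀ a, CNF.Sat a χ → (Lit.eval a l ↔ ∀ g ∈ h, Lit.eval a g)

namespace IsPCReencoding

variable {χ ψ φ Γ : CNF V} {X Z A : Set V}

theorem unitAbsorbs (R : IsPCReencoding χ ψ X Z) (hχ : χ ⊆ Γ) : ∀ C ∈ ψ, UnitAbsorbs Γ C :=
  fun C hC => R.pcon.unitAbsorbs R.vars_subset hχ
    (fun _ hg => Or.inl (R.vars_constraint_subset (CNF.mem_vars hC hg)))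
    (fun a ha => R.sat_of_sat a ha C hC)

theorem exists_sat_union (R : IsPCReencoding χ ψ X Z) (hφ : Disjoint (CNF.vars φ) Z)
    {b : V → Bool} (hb : CNF.Sat b (φ ∪ ψ)) :
    ∃ a, CNF.Sat a (φ ∪ χ) ∧ ∀ v ∉ Z, a v = b v := by
  classical
  rw [CNF.sat_union_s6] at hb
  obtain ⟨c, hc, hcb⟩ := R.exists_sat b hb.2
  refine ⟨Z.piecewise c b, CNF.sat_union_s6.2 ⟨?_, ?_⟩, fun v hv => piecewise_eq_of_notMem _ _ _ hv⟩
  · exact hb.1.of_eqOn_vars fun v hv => piecewise_eq_of_notMem _ _ _ (disjoint_left.1 hφ hv)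
  · refine hc.of_eqOn_vars fun v hv => ?_
    rcases R.vars_subset hv with hX | hZ
    · rw [piecewise_eq_of_notMem _ _ _ (disjoint_left.1 R.disjoint hX), hcb hX]
    · exact piecewise_eq_of_mem _ _ _ hZ

theorem isEncodingOn_union {I : Set V} {f : (V → Bool) → Prop} (R : IsPCReencoding χ ψ X Z)
    (hφ : Disjoint (CNF.vars φ) Z) (hI : Disjoint I Z) (henc : IsEncodingOn (φ ∪ ψ) I f) :
    IsEncodingOn (φ ∪ χ) I f := by
  intro a
  rw [henc a]
  constructor
  · rintro ⟨b, hba, hb⟩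
    obtain ⟨c, hc, hcb⟩ := R.exists_sat_union hφ hb
    exact ⟨c, fun v hv => (hcb v (disjoint_left.1 hI hv)).trans (hba v hv), hc⟩
  · rintro ⟨b, hba, hb⟩
    rw [CNF.sat_union_s6] at hb
    refine ⟨b, hba, CNF.sat_union_s6.2 ⟨hb.1, R.sat_of_sat b hb.2⟩⟩

theorem unitDeriv_of_entails (R : IsPCReencoding χ ψ X Z) (hpc : PCon (φ ∪ ψ) A)
    (hφΓ : φ ⊆ Γ) (hχΓ : χ ⊆ Γ) {S : Set (Lit V)} (hSA : LitsOn S A)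
    (hSΓ : ∀ g ∈ S, UnitDeriv Γ {g}) {p : Lit V} (hp : p.var ∈ A)
    (hent : CNF.Entails ((φ ∪ ψ) ∪ paUnits S) p) : UnitDeriv Γ {p} ∨ UnitDeriv Γ ∅ := by
  have habs := R.unitAbsorbs hχΓ
  rcases hpc.unitDeriv_of_entails (union_subset_union_left ψ hφΓ) hSA
    (fun g hg => (hSΓ g hg).mono subset_union_left) hp hent with h | h
  · exact h.of_union_unitAbsorbs habs subsingleton_singleton
  · exact Or.inr ((h.of_union_unitAbsorbs habs subsingleton_empty).elim id id)

theorem exists_countermodel (R : IsPCReencoding χ ψ X Z) (hpc : PCon (φ ∪ ψ) A)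
    (hφA : CNF.vars φ ⊆ A) (hXA : X ⊆ A) (hAZ : Disjoint A Z) (hφΓ : φ ⊆ Γ) (hχΓ : χ ⊆ Γ)
    (hΓ : CNF.vars Γ ⊆ A ∪ Z) (hbot : ¬ UnitDeriv Γ ∅) {p : Lit V} (hp : p.var ∈ A)
    (hpΓ : ¬ UnitDeriv Γ {p}) :
    ∃ a, CNF.Sat a (φ ∪ χ) ∧ (∀ g, UnitDeriv Γ {g} → Lit.eval a g) ∧ ¬ Lit.eval a p := by
  set S := {g | UnitDeriv Γ {g} ∧ g.var ∈ A}
  have hnent : ¬ CNF.Entails ((φ ∪ ψ) ∪ paUnits S) p := fun h =>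
    (R.unitDeriv_of_entails hpc hφΓ hχΓ (fun g hg => hg.2) (fun g hg => hg.1) hp h).elim hpΓ hbot
  obtain ⟨b, hb, hbp⟩ : ∃ b, CNF.Sat b ((φ ∪ ψ) ∪ paUnits S) ∧ ¬ Lit.eval b p := by
    simpa [CNF.Entails] using hnent
  rw [CNF.sat_union_s6, CNF.sat_paUnits_s6] at hb
  obtain ⟨a, ha, hab⟩ := R.exists_sat_union (hAZ.mono_left hφA) hb.1
  have hA : ∀ g : Lit V, g.var ∈ A → (Lit.eval a g ↔ Lit.eval b g) := fun g hg => by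
    simp only [Lit.eval, hab _ (disjoint_left.1 hAZ hg)]
  have hS : ∀ g ∈ S, Lit.eval a g := fun g hg => (hA g hg.2).2 (hb.2 g hg)
  refine ⟨a, ha, fun g hg => ?_, fun h => hbp ((hA p hp).1 h)⟩
  rcases hΓ hg.var_mem_vars with hgA | hgZ
  · exact hS g ⟨hg, hgA⟩
  obtain ⟨h, hhX, hiff⟩ := R.defined g hgZ
  refine (hiff a (CNF.sat_union_s6.1 ha).2).2 fun q hq => hS q ⟨?_, hXA (hhX q hq)⟩
  -- `h(g)` is propagated from `g` by `χ`, hence derived in `Γ`.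
  refine (R.pcon.unitDeriv_of_entails hχΓ (α := {g}) ?_ (by simpa using hg)
    (Or.inl (hhX q hq)) fun c hc => ?_).resolve_right hbot
  · rintro _ rfl
    exact Or.inr hgZ
  · rw [CNF.sat_union_s6, CNF.sat_paUnits_s6] at hc
    exact (hiff c hc.1).1 (hc.2 g rfl) q hq

theorem pcon_union (R : IsPCReencoding χ ψ X Z) (hpc : PCon (φ ∪ ψ) A)
    (hφA : CNF.vars φ ⊆ A) (hXA : X ⊆ A) (hAZ : Disjoint A Z) : PCon (φ ∪ χ) (A ∪ Z) := by
  intro α _ hαW l hl hent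
  set Γ := (φ ∪ χ) ∪ paUnits α
  by_contra hcon
  obtain ⟨hlΓ, hbot⟩ := not_or.1 hcon
  have hΓ : CNF.vars Γ ⊆ A ∪ Z := by
    rw [CNF.vars_union, CNF.vars_union, CNF.vars_paUnits]
    refine union_subset (union_subset (hφA.trans subset_union_left) ?_) ?_
    · exact R.vars_subset.trans (union_subset_union_left Z hXA)
    · rintro _ ⟨g, hg, rfl⟩
      exact hαW g hg
  have hmodel : ∀ p : Lit V, p.var ∈ A → ¬ UnitDeriv Γ {p} →
      ∃ a, CNF.Sat a Γ ∧ ¬ Lit.eval a p := by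
    intro p hp hpΓ
    obtain ⟨a, ha, hder, hap⟩ := R.exists_countermodel hpc hφA hXA hAZ
      (subset_union_left.trans subset_union_left) (subset_union_right.trans subset_union_left)
      hΓ hbot hp hpΓ
    exact ⟨a, CNF.sat_union_s6.2 ⟨ha, CNF.sat_paUnits_s6.2 fun g hg =>
      hder g (.base (Or.inr ⟨g, hg, rfl⟩))⟩, hap⟩
  rcases hl with hlA | hlZ
  · obtain ⟨a, ha, hal⟩ := hmodel l hlA hlΓ
    exact hal (hent a ha)
  obtain ⟨h, hhX, hiff⟩ := R.defined l hlZ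
  by_cases hh : ∀ q ∈ h, UnitDeriv Γ {q}
  · refine (R.pcon.unitDeriv_of_entails (subset_union_right.trans subset_union_left)
      (fun q hq => Or.inl (hhX q hq)) hh (Or.inr hlZ) fun c hc => ?_).elim hlΓ hbot
    rw [CNF.sat_union_s6, CNF.sat_paUnits_s6] at hc
    exact (hiff c hc.1).2 hc.2
  · push Not at hh
    obtain ⟨q, hq, hqΓ⟩ := hh
    obtain ⟨a, ha, haq⟩ := hmodel q (hXA (hhX q hq)) hqΓ
    have haχ : CNF.Sat a χ := (CNF.sat_union_s6.1 (CNF.sat_union_s6.1 ha).1).2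
    exact haq ((hiff a haχ).1 (hent a ha) q hq)

end IsPCReencoding

theorem amoStar_sat_iff {x : Set V} {a : V → Bool} :
    CNF.Sat a (amoStar x) ↔ ∀ u ∈ x, ∀ v ∈ x, a u = true → a v = true → u = v := by
  simp only [CNF.Sat, amoStar, Clause.Sat, mem_ofPred_eq, forall_exists_index, and_imp]
  constructor
  · intro h u hu v hv hau hav
    by_contra huv
    obtain ⟨l, hl, hal⟩ := h _ u hu v hv huv rfl
    rcases hl with rfl | rfl <;> simp_all [Lit.eval, negL]
  · rintro h _ u hu v hv huv rfl
    by_cases hau : a u = true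
    · exact ⟨negL v, by simp, by simpa [Lit.eval, negL] using fun hav => huv (h u hu v hv hau hav)⟩
    · exact ⟨negL u, by simp, by simpa [Lit.eval, negL] using hau⟩

theorem eoStar_sat_iff {x : Set V} {a : V → Bool} : CNF.Sat a (eoStar x) ↔ EOpredS x a := by
  have halo : CNF.Sat a {(fun v => posL v) '' x} ↔ ∃ v ∈ x, a v = true := by
    simp [CNF.Sat, Clause.Sat, Lit.eval, posL]
  rw [eoStar, CNF.sat_union_s6, amoStar_sat_iff, halo, EOpredS]
  constructor
  · rintro ⟨hamo, v, hv, hav⟩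
    exact ⟨v, ⟨hv, hav⟩, fun u hu => hamo u hu.1 v hv hu.2 hav⟩
  · rintro ⟨v, ⟨hv, hav⟩, huniq⟩
    exact ⟨fun u hu w hw hau haw => (huniq u ⟨hu, hau⟩).trans (huniq w ⟨hw, haw⟩).symm, v, hv, hav⟩

theorem vars_eoStar_subset (x : Set V) : CNF.vars (eoStar x) ⊆ x := by
  simp only [CNF.vars, eoStar, amoStar, iUnion_subset_iff]
  rintro C (⟨u, hu, v, hv, -, rfl⟩ | rfl)
  · simp [negL, insert_subset_iff, hu, hv]
  · simp [posL, image_image]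

end

theorem stmt6_general {V : Type u} (x x' y z : Set V)
    (hxz : Disjoint x z)
    (hx'z : Disjoint x' z) (hyz : Disjoint y z)
    (φ eo' : CNF V)
    (hφv : CNF.vars φ ⊆ x ∪ x' ∪ y)
    (heo'v : CNF.vars eo' ⊆ x ∪ z)
    (f : (V → Bool) → Prop)
    (henc : IsEncodingOn (φ ∪ eoStar x) (x ∪ x') f)
    (hpc : PCon (φ ∪ eoStar x) (x ∪ x' ∪ y))
    (henc' : IsEncodingOn eo' x (EOpredS x))
    (hpc' : PCon eo' (x ∪ z))
    (hh : ∀ l : Lit V, l.var ∈ z → ∃ h : Set (Lit V), ConsistentPA h ∧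
      (∀ g ∈ h, g.var ∈ x) ∧
      (∀ a : V → Bool, CNF.Sat a eo' → (Lit.eval a l ↔ ∀ g ∈ h, Lit.eval a g))) :
    IsEncodingOn (φ ∪ eo') (x ∪ x') f ∧ PCon (φ ∪ eo') (x ∪ x' ∪ y ∪ z) := by
  have R : IsPCReencoding eo' (eoStar x) x z :=
    { vars_subset := heo'v
      vars_constraint_subset := vars_eoStar_subset x
      disjoint := hxz
      sat_of_sat := fun a ha => eoStar_sat_iff.2 ((henc' a).2 ⟨a, fun _ _ => rfl, ha⟩)
      exists_sat := fun b hb => by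
        obtain ⟨c, hcb, hc⟩ := (henc' b).1 (eoStar_sat_iff.1 hb)
        exact ⟨c, hc, hcb⟩
      pcon := hpc'
      defined := fun l hl => by
        obtain ⟨h, -, hhx, hiff⟩ := hh l hl
        exact ⟨h, hhx, hiff⟩ }
  have hIz : Disjoint (x ∪ x') z := disjoint_union_left.2 ⟨hxz, hx'z⟩
  have hAz : Disjoint (x ∪ x' ∪ y) z := disjoint_union_left.2 ⟨hIz, hyz⟩
  exact ⟨R.isEncodingOn_union (hAz.mono_left hφv) hIz henc,
    R.pcon_union hpc hφv (subset_union_left.trans subset_union_left) hAz⟩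

/-- If `φ(x,x',y) ∧ eo*(x)` is a PC encoding of a constraint
`f(x,x')` and `eo'(x,z)` is a PC encoding of `EO(x)` with auxiliary variables
`z` such that every literal `l` on a variable of `z` is, modulo `eo'`,
equivalent to a partial assignment `h(l) ⊆ lit(x)`, then
`φ(x,x',y) ∧ eo'(x,z)` is a PC encoding of `f(x,x')`. -/
theorem stmt6 {V : Type u} (x x' y z : Set V)
    (hxx' : Disjoint x x') (hxy : Disjoint x y) (hxz : Disjoint x z)
    (hx'y : Disjoint x' y) (hx'z : Disjoint x' z) (hyz : Disjoint y z)
    (φ eo' : CNF V)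
    (hφv : CNF.vars φ ⊆ x ∪ x' ∪ y)
    (heo'v : CNF.vars eo' ⊆ x ∪ z)
    (f : (V → Bool) → Prop)
    (hf : ∀ a b : V → Bool, (∀ v ∈ x ∪ x', a v = b v) → (f a ↔ f b))
    (henc : IsEncodingOn (φ ∪ eoStar x) (x ∪ x') f)
    (hpc : PCon (φ ∪ eoStar x) (x ∪ x' ∪ y))
    (henc' : IsEncodingOn eo' x (EOpredS x))
    (hpc' : PCon eo' (x ∪ z))
    (hh : ∀ l : Lit V, l.var ∈ z → ∃ h : Set (Lit V), ConsistentPA h ∧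
      (∀ g ∈ h, g.var ∈ x) ∧
      (∀ a : V → Bool, CNF.Sat a eo' → (Lit.eval a l ↔ ∀ g ∈ h, Lit.eval a g))) :
    IsEncodingOn (φ ∪ eo') (x ∪ x') f ∧ PCon (φ ∪ eo') (x ∪ x' ∪ y ∪ z) :=
  stmt6_general x x' y z hxz hx'z hyz φ eo' hφv heo'v f henc hpc henc' hpc' hh
end
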